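/- arXiv:1708.04530 — 4 statements merged into one kernel-verified Lean document; each statement's English description precedes it below -/
import Mathlib

section
/- Let M be a topological space, W ⊆ M, w₀ ∈ W, and suppose that the second homotopy group π₂(M, w₀) is trivial (a subsingleton). Let f₀, f₁ ∈ ℛ_{w₀}(W, M) and suppose that their boundary loops γᵢ(t) = fᵢ(exp(2πit)) (t ∈ [0,1]), which are loops in W based at w₀, are homotopic rel endpoints through loops in W. Then f₀ and f₁ are homotopic in ℛ_{w₀}(W, M): there exists a continuous map H : [0,1] × 𝔻̄ → M with H(0,·) = f₀, H(1,·) = f₁, and for every t ∈ [0,1], H(t, 𝕋) ⊆ W and H(t, 1) = w₀. (This expresses that the boundary-loop homomorphism δ₂ : ρ₁(W, M, w₀) → π₁(W, w₀) is injective when π₂(M, w₀) = 0.) -/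
/-!
The cylinder `Z = [0,1] × 𝔻̄` is a convex body in `ℝ × ℂ ≅ ℝ³`, so its boundary is a 2-sphere.
On it, put `f₀` on the bottom, `f₁` on the top and, on the side `[0,1] × 𝕋`, the homotopy of the
boundary loops read through `(s, t) ↦ (s, exp 2πit)`; these agree on the two rims, and the segment
`[0,1] × {1}` goes to `w₀`. Composed with a map `I² → S²` collapsing `∂I²` to a point, this boundary
map is an element of `π₂(M, w₀)`. A null-homotopy `K` of it extends the boundary map over the ball
by coning, `λ • x ↦ K (1 - λ, x)`, and carried back to `Z` this extension is the required `H`.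
-/

open Complex Metric Set

/-- The loop `t ↦ exp (2π i t)` parametrizing the unit circle. -/
noncomputable def unitLoop (t : ℝ) : ℂ := Complex.exp (2 * Real.pi * t * Complex.I)

open Function Topology Module unitInterval

theorem exists_continuousOn_range_of_factorsThrough {X Y Z : Type*} [TopologicalSpace X]
    [CompactSpace X] [TopologicalSpace Y] [T2Space Y] [TopologicalSpace Z] [Nonempty Z]
    {q : X → Y} (hq : Continuous q) {f : X → Z} (hf : Continuous f) (hfq : FactorsThrough f q) :
    ∃ G : Y → Z, ContinuousOn G (range q) ∧ ∀ x, G (q x) = f x := by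
  classical
  let q' : C(X, range q) := ⟨rangeFactorization q, hq.rangeFactorization⟩
  have hq' : IsQuotientMap q' :=
    q'.continuous.isClosedMap.isQuotientMap q'.continuous rangeFactorization_surjective
  have hfq' : FactorsThrough (⟨f, hf⟩ : C(X, Z)) q' := fun _ _ h => hfq (congrArg Subtype.val h)
  let F := hq'.lift ⟨f, hf⟩ hfq'
  have hF (y : range q) : extend Subtype.val F (fun _ => Classical.arbitrary Z) y = F y :=
    Subtype.val_injective.extend_apply _ _ y
  refine ⟨extend Subtype.val F fun _ => Classical.arbitrary Z, ?_, fun x => ?_⟩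
  · rw [continuousOn_iff_continuous_domRestrict]
    convert F.continuous
    exact funext hF
  · exact (hF (q' x)).trans (DFunLike.congr_fun (hq'.lift_comp ⟨f, hf⟩ hfq') x)

section Collapse

variable {X Y : Type*} [TopologicalSpace X] [TopologicalSpace Y] {U : Set X}

open Classical in
noncomputable def collapseToInfty (e : U ≃ₜ Y) (x : X) : OnePoint Y :=
  if h : x ∈ U then ↑(e ⟨x, h⟩) else OnePoint.infty

variable (e : U ≃ₜ Y)

theorem collapseToInfty_of_mem {x : X} (hx : x ∈ U) : collapseToInfty e x = e ⟨x, hx⟩ :=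
  dif_pos hx

theorem collapseToInfty_of_notMem {x : X} (hx : x ∉ U) :
    collapseToInfty e x = OnePoint.infty :=
  dif_neg hx

theorem continuous_collapseToInfty [CompactSpace X] [T2Space X] (hU : IsOpen U) :
    Continuous (collapseToInfty e) := by
  rw [continuous_def]
  intro s hs
  by_cases h : OnePoint.infty ∈ s
  · rw [OnePoint.isOpen_iff_of_mem h] at hs
    have hpre : (collapseToInfty e ⁻¹' s)ᶜ = Subtype.val '' (e ⁻¹' ((↑) ⁻¹' s)ᶜ) := by
      ext x
      by_cases hx : x ∈ U <;> simp [collapseToInfty, hx, h]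
    rw [← isClosed_compl_iff, hpre]
    exact ((e.isCompact_preimage.2 hs.2).image continuous_subtype_val).isClosed
  · rw [OnePoint.isOpen_iff_of_notMem h] at hs
    have hpre : collapseToInfty e ⁻¹' s = Subtype.val '' (e ⁻¹' ((↑) ⁻¹' s)) := by
      ext x
      by_cases hx : x ∈ U <;> simp [collapseToInfty, hx, h]
    rw [hpre]
    exact hU.isOpenMap_subtype_val _ (hs.preimage e.continuous)

theorem collapseToInfty_surjective (hU : Uᶜ.Nonempty) : Surjective (collapseToInfty e) := by
  rintro (_ | y)
  · obtain ⟨x, hx⟩ := hU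
    exact ⟨x, collapseToInfty_of_notMem e hx⟩
  · exact ⟨e.symm y, by rw [collapseToInfty_of_mem e (e.symm y).2, Subtype.coe_eta,
      e.apply_symm_apply]; rfl⟩

theorem eq_or_notMem_of_collapseToInfty_eq {x x' : X}
    (h : collapseToInfty e x = collapseToInfty e x') : x = x' ∨ x ∉ U ∧ x' ∉ U := by
  by_cases hx : x ∈ U <;> by_cases hx' : x' ∈ U
  · rw [collapseToInfty_of_mem e hx, collapseToInfty_of_mem e hx', OnePoint.coe_eq_coe] at h
    exact .inl (congrArg Subtype.val (e.injective h))
  · rw [collapseToInfty_of_mem e hx, collapseToInfty_of_notMem e hx'] at h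
    exact (OnePoint.coe_ne_infty _ h).elim
  · rw [collapseToInfty_of_notMem e hx, collapseToInfty_of_mem e hx'] at h
    exact (OnePoint.infty_ne_coe _ h).elim
  · exact .inr ⟨hx, hx'⟩

end Collapse

section Cube

variable {N : Type*}

theorem Cube.notMem_boundary_iff {y : I^N} :
    y ∉ Cube.boundary N ↔ ∀ i, 0 < (y i : ℝ) ∧ (y i : ℝ) < 1 := by
  simp only [Cube.boundary, mem_ofPred_eq, not_exists, not_or]
  exact forall_congr' fun i =>
    and_congr unitInterval.pos_iff_ne_zero.symm unitInterval.lt_one_iff_ne_one.symm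

theorem Cube.isOpen_compl_boundary [Finite N] : IsOpen (Cube.boundary N)ᶜ := by
  have : (Cube.boundary N)ᶜ = univ.pi fun _ => ({0, 1} : Set I)ᶜ := by
    ext y
    simp [Cube.boundary]
  rw [this]
  exact isOpen_set_pi finite_univ fun _ _ => (Finite.isClosed (by simp)).isOpen_compl

theorem mem_ball_zero_pi_iff [Fintype N] {x : N → ℝ} : x ∈ ball 0 1 ↔ ∀ i, |x i| < 1 := by
  simp [pi_norm_lt_iff one_pos, Real.norm_eq_abs]

noncomputable def Cube.interiorHomeomorphBall [Fintype N] :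
    ↥(Cube.boundary N)ᶜ ≃ₜ ball (0 : N → ℝ) 1 where
  toFun y := ⟨fun i => 2 * (y.1 i : ℝ) - 1, mem_ball_zero_pi_iff.2 fun i => by
    have := Cube.notMem_boundary_iff.1 y.2 i
    rw [abs_lt]
    constructor <;> linarith⟩
  invFun x := ⟨fun i => ⟨(x.1 i + 1) / 2, by
      have := abs_lt.1 (mem_ball_zero_pi_iff.1 x.2 i)
      constructor <;> linarith⟩,
    Cube.notMem_boundary_iff.2 fun i => by
      have := abs_lt.1 (mem_ball_zero_pi_iff.1 x.2 i)
      dsimp only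
      constructor <;> linarith⟩
  left_inv y := by ext i; simp
  right_inv x := by ext i; simp; ring
  continuous_toFun := (continuous_pi fun i => continuous_const.mul
    ((continuous_apply i).comp continuous_subtype_val).subtype_val |>.sub
      continuous_const).subtype_mk _
  continuous_invFun := (continuous_pi fun i => Continuous.subtype_mk
    ((((continuous_apply i).comp continuous_subtype_val).add continuous_const).div_const _)
      _).subtype_mk _

/-- `I^N / ∂I^N` is the sphere of dimension `card N`, with `∂I^N` sent to a prescribed point. -/
theorem Cube.exists_collapse_boundary_sphere [Fintype N] [Nonempty N]
    {E : Type*} [NormedAddCommGroup E] [InnerProductSpace ℝ E]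
    (hE : finrank ℝ E = Fintype.card N + 1) {p : E} (hp : ‖p‖ = 1) :
    ∃ P : (I^N) → E, Continuous P ∧ range P = sphere 0 1 ∧ (∀ y ∈ Cube.boundary N, P y = p) ∧
      ∀ y y', P y = P y' → y = y' ∨ y ∈ Cube.boundary N ∧ y' ∈ Cube.boundary N := by
  have : FiniteDimensional ℝ E := Module.finite_of_finrank_eq_succ hE
  have : Fact (finrank ℝ E = Fintype.card N + 1) := ⟨hE⟩
  have hp0 : p ≠ 0 := ne_zero_of_norm_ne_zero (by rw [hp]; exact one_ne_zero)
  let L : (N → ℝ) ≃L[ℝ] (ℝ ∙ p)ᗮ := ContinuousLinearEquiv.ofFinrankEq <| by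
    rw [Submodule.finrank_orthogonal_span_singleton (n := Fintype.card N) hp0,
      Module.finrank_fintype_fun_eq_card]
  let e : ↥(Cube.boundary N)ᶜ ≃ₜ (ℝ ∙ p)ᗮ :=
    Cube.interiorHomeomorphBall.trans (Homeomorph.unitBall.symm.trans L.toHomeomorph)
  -- stereographic projection from `p`, which sends `∞` to `p`
  let S := onePointHyperplaneHomeoUnitSphere hp
  have hS : Surjective fun y => S (collapseToInfty e y) :=
    S.surjective.comp <| collapseToInfty_surjective e
      ⟨fun _ => 0, not_not.2 ⟨Classical.arbitrary N, .inl rfl⟩⟩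
  refine ⟨fun y => S (collapseToInfty e y), ?_, ?_, fun y hy => ?_, fun y y' h => ?_⟩
  · exact continuous_subtype_val.comp
      (S.continuous.comp (continuous_collapseToInfty e Cube.isOpen_compl_boundary))
  · exact (range_comp Subtype.val _).trans (by rw [hS.range_eq, image_univ, Subtype.range_coe])
  · simp only [collapseToInfty_of_notMem e (not_not.2 hy)]
    rfl
  · simpa using eq_or_notMem_of_collapseToInfty_eq e (S.injective (Subtype.ext h))

end Cube

section Ball

variable {E : Type*} [NormedAddCommGroup E]

theorem eq_and_eq_zero_or_eq_of_smul_eq_smul [NormedSpace ℝ E] {a b : ℝ} (ha : 0 ≤ a)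
    (hb : 0 ≤ b) {u v : E} (hu : ‖u‖ = 1) (hv : ‖v‖ = 1) (h : a • u = b • v) :
    a = b ∧ (a = 0 ∨ u = v) := by
  have hab : a = b := by
    simpa [norm_smul, hu, hv, abs_of_nonneg ha, abs_of_nonneg hb] using congrArg norm h
  subst hab
  exact ⟨rfl, or_iff_not_imp_left.2 fun ha0 => smul_right_injective E ha0 h⟩

theorem range_smul_eq_closedBall [NormedSpace ℝ E] {Z : Type*} [Nonempty Z] {P : Z → E}
    (hP : range P = sphere 0 1) :
    range (fun q : I × Z => (q.1 : ℝ) • P q.2) = closedBall 0 1 := by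
  have hPnorm (z : Z) : ‖P z‖ = 1 := mem_sphere_zero_iff_norm.1 (hP ▸ mem_range_self z)
  ext x
  constructor
  · rintro ⟨⟨a, z⟩, rfl⟩
    simp [norm_smul, hPnorm, abs_of_nonneg a.2.1, a.2.2]
  · intro hx
    rcases eq_or_ne x 0 with rfl | hx0
    · exact ⟨(0, Classical.arbitrary Z), zero_smul _ _⟩
    · obtain ⟨z, hz⟩ : ‖x‖⁻¹ • x ∈ range P := hP ▸ (by simp [norm_smul, hx0])
      refine ⟨(⟨‖x‖, norm_nonneg _, mem_closedBall_zero_iff.1 hx⟩, z), ?_⟩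
      simp [hz, smul_smul, hx0]

theorem exists_continuousOn_closedBall_eqOn_sphere {N : Type*} [Fintype N] [Nonempty N]
    [InnerProductSpace ℝ E] (hE : finrank ℝ E = Fintype.card N + 1) {M : Type*}
    [TopologicalSpace M] {w₀ : M} (hπ : Subsingleton (HomotopyGroup N M w₀)) {β : E → M}
    (hβ : ContinuousOn β (sphere 0 1)) {p : E} (hp : p ∈ sphere 0 1) (hβp : β p = w₀) :
    ∃ H : E → M, ContinuousOn H (closedBall 0 1) ∧ EqOn H β (sphere 0 1) := by
  have : FiniteDimensional ℝ E := Module.finite_of_finrank_eq_succ hE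
  obtain ⟨P, hPc, hPrange, hPb, hPfib⟩ :=
    Cube.exists_collapse_boundary_sphere hE (mem_sphere_zero_iff_norm.1 hp)
  have hPnorm (y : I^N) : ‖P y‖ = 1 := mem_sphere_zero_iff_norm.1 (hPrange ▸ mem_range_self y)
  let g : GenLoop N M w₀ := ⟨⟨β ∘ P, hβ.comp_continuous hPc fun y => hPrange ▸ mem_range_self y⟩,
    fun y hy => by simp [hPb y hy, hβp]⟩
  obtain ⟨K⟩ : GenLoop.Homotopic g GenLoop.const :=
    Quotient.exact (Subsingleton.elim (α := HomotopyGroup N M w₀) (Quotient.mk _ g)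
      (Quotient.mk _ GenLoop.const))
  have hK (τ : I) {y : I^N} (hy : y ∈ Cube.boundary N) : K (τ, y) = w₀ :=
    (K.eq_fst τ hy).trans (g.2 y hy)
  -- On the cone `(λ, y) ↦ λ • P y` the apex sees `K (1, ·) = w₀`, the sphere `K (0, ·) = β ∘ P`.
  have hfac : FactorsThrough (fun q : I × (I^N) => K (σ q.1, q.2))
      (fun q => (q.1 : ℝ) • P q.2) := by
    rintro ⟨a, y⟩ ⟨b, y'⟩ h
    obtain ⟨hab, h0 | hyy⟩ :=
      eq_and_eq_zero_or_eq_of_smul_eq_smul a.2.1 b.2.1 (hPnorm y) (hPnorm y') h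
    · obtain rfl : a = 0 := Subtype.ext h0
      obtain rfl : b = 0 := Subtype.ext (hab ▸ h0)
      simp only [symm_zero, K.apply_one]
      rfl
    · obtain rfl : a = b := Subtype.ext hab
      rcases hPfib y y' hyy with rfl | ⟨hy, hy'⟩
      · rfl
      · exact (hK _ hy).trans (hK _ hy').symm
  have : Nonempty M := ⟨w₀⟩
  obtain ⟨H, hHc, hH⟩ := exists_continuousOn_range_of_factorsThrough (by fun_prop)
    (K.continuous.comp (by fun_prop)) hfac
  refine ⟨H, range_smul_eq_closedBall hPrange ▸ hHc, ?_⟩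
  rw [← hPrange]
  rintro _ ⟨y, rfl⟩
  simpa [K.apply_zero, g] using hH (1, y)

end Ball

section ConvexBody

variable {E : Type*} [NormedAddCommGroup E] [NormedSpace ℝ E] [FiniteDimensional ℝ E]
  {C : Set E}

theorem Convex.exists_homeomorph_euclideanSpace {n : ℕ} (hE : finrank ℝ E = n)
    (hconv : Convex ℝ C) (hcomp : IsCompact C) (hint : (interior C).Nonempty) :
    ∃ T : E ≃ₜ EuclideanSpace ℝ (Fin n), T '' C = closedBall 0 1 ∧
      T '' frontier C = sphere 0 1 := by
  let L : E ≃L[ℝ] EuclideanSpace ℝ (Fin n) := ContinuousLinearEquiv.ofFinrankEq (by simp [hE])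
  have hLconv : Convex ℝ (L '' C) := hconv.linear_image (L : E →ₗ[ℝ] EuclideanSpace ℝ (Fin n))
  have hLcomp : IsCompact (L '' C) := hcomp.image L.continuous
  have hLint : (interior (L '' C)).Nonempty := by
    rw [← L.coe_toHomeomorph, ← Homeomorph.image_interior]
    exact hint.image _
  obtain ⟨h, -, hC, hfr⟩ :=
    exists_homeomorph_image_interior_closure_frontier_eq_unitBall hLconv hLint hLcomp.isBounded
  have hT : ⇑(L.toHomeomorph.trans h) = h ∘ L := rfl
  refine ⟨L.toHomeomorph.trans h, ?_, ?_⟩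
  · rw [hT, image_comp, ← hC, hLcomp.isClosed.closure_eq]
  · rw [hT, image_comp, ← hfr, ← L.coe_toHomeomorph, Homeomorph.image_frontier]

theorem Convex.exists_continuousOn_eqOn_frontier {N : Type*} [Fintype N] [Nonempty N]
    (hE : finrank ℝ E = Fintype.card N + 1) (hconv : Convex ℝ C) (hcomp : IsCompact C)
    (hint : (interior C).Nonempty) {M : Type*} [TopologicalSpace M] {w₀ : M}
    (hπ : Subsingleton (HomotopyGroup N M w₀)) {β : E → M} (hβ : ContinuousOn β (frontier C))
    {p : E} (hp : p ∈ frontier C) (hβp : β p = w₀) :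
    ∃ H : E → M, ContinuousOn H C ∧ EqOn H β (frontier C) := by
  obtain ⟨T, hTC, hTfr⟩ := hconv.exists_homeomorph_euclideanSpace hE hcomp hint
  have hTsymm : MapsTo T.symm (sphere 0 1) (frontier C) := by
    rw [← hTfr]
    rintro _ ⟨x, hx, rfl⟩
    simpa using hx
  obtain ⟨H, hHc, hHβ⟩ := exists_continuousOn_closedBall_eqOn_sphere (by simp) hπ
    (hβ.comp T.symm.continuous.continuousOn hTsymm) (hTfr ▸ mem_image_of_mem T hp)
    (by simpa using hβp)
  refine ⟨H ∘ T, hHc.comp T.continuous.continuousOn (hTC ▸ mapsTo_image T C), fun x hx => ?_⟩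
  have hTx : T x ∈ sphere 0 1 := hTfr ▸ mem_image_of_mem T hx
  simpa using hHβ hTx

end ConvexBody

section UnitLoop

theorem continuous_unitLoop : Continuous unitLoop := by
  unfold unitLoop
  fun_prop

theorem unitLoop_zero : unitLoop 0 = 1 := by
  simp [unitLoop]

theorem periodic_unitLoop : Periodic unitLoop 1 := fun t => by
  rw [unitLoop, unitLoop, ofReal_add, ofReal_one, mul_add, mul_one, add_mul, exp_add,
    exp_two_pi_mul_I, mul_one]

theorem unitLoop_mem_sphere (t : ℝ) : unitLoop t ∈ sphere (0 : ℂ) 1 := by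
  rw [mem_sphere_zero_iff_norm, unitLoop, ← ofReal_ofNat, ← ofReal_mul, ← ofReal_mul,
    norm_exp_ofReal_mul_I]

theorem range_unitLoop : range (fun t : I => unitLoop t) = sphere (0 : ℂ) 1 := by
  refine Subset.antisymm (range_subset_iff.2 fun t => unitLoop_mem_sphere t) fun ζ hζ => ?_
  have hx : unitLoop (arg ζ / (2 * Real.pi)) = ζ := by
    have h2π : (2 * Real.pi : ℂ) ≠ 0 := by exact_mod_cast Real.two_pi_pos.ne'
    conv_rhs => rw [← norm_mul_exp_arg_mul_I ζ, mem_sphere_zero_iff_norm.1 hζ]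
    rw [unitLoop, ofReal_one, one_mul, ofReal_div, ofReal_mul, ofReal_ofNat,
      mul_div_cancel₀ _ h2π]
  have ht := toIcoMod_mem_Ico one_pos 0 (arg ζ / (2 * Real.pi))
  rw [zero_add] at ht
  exact ⟨⟨_, Ico_subset_Icc_self ht⟩, (periodic_unitLoop.sub_zsmul_eq _).trans hx⟩

theorem unitLoop_eq_unitLoop {t t' : I} (h : unitLoop t = unitLoop t') :
    t = t' ∨ (t = 0 ∨ t = 1) ∧ (t' = 0 ∨ t' = 1) := by
  obtain ⟨n, hn⟩ := Complex.exp_eq_exp_iff_exists_int.1 h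
  have htn : (t : ℝ) = t' + n := by
    have := congrArg Complex.im hn
    simp only [mul_im, mul_re, ofReal_re, ofReal_im, I_re, I_im, intCast_re, intCast_im,
      re_ofNat, im_ofNat, add_im] at this
    exact mul_left_cancel₀ Real.two_pi_pos.ne' (by linarith)
  obtain ⟨ht₀, ht₁⟩ := t.2
  obtain ⟨ht₀', ht₁'⟩ := t'.2
  have hn₁ : n ≤ 1 := by exact_mod_cast (by linarith : (n : ℝ) ≤ 1)
  have hn₂ : -1 ≤ n := by exact_mod_cast (by linarith : (-1 : ℝ) ≤ n)
  obtain rfl | rfl | rfl : n = -1 ∨ n = 0 ∨ n = 1 := by omega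
  all_goals push_cast at htn
  · exact .inr ⟨.inl (Icc.coe_eq_zero.1 (by linarith)), .inr (Icc.coe_eq_one.1 (by linarith))⟩
  · exact .inl (Subtype.ext (by linarith))
  · exact .inr ⟨.inr (Icc.coe_eq_one.1 (by linarith)), .inl (Icc.coe_eq_zero.1 (by linarith))⟩

theorem ContinuousMap.exists_continuousOn_comp_unitLoop {X : Type*} [TopologicalSpace X]
    (Γ : C(I × I, X)) (hΓ : ∀ s, Γ (s, 0) = Γ (s, 1)) :
    ∃ G : ℝ × ℂ → X, ContinuousOn G (Icc 0 1 ×ˢ sphere 0 1) ∧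
      ∀ s t : I, G (s, unitLoop t) = Γ (s, t) := by
  have hends (s : I) {t : I} (ht : t = 0 ∨ t = 1) : Γ (s, t) = Γ (s, 0) := by
    rcases ht with rfl | rfl
    exacts [rfl, (hΓ s).symm]
  have hfac : FactorsThrough Γ fun q : I × I => ((q.1 : ℝ), unitLoop q.2) := by
    rintro ⟨s, t⟩ ⟨s', t'⟩ h
    obtain rfl : s = s' := Subtype.ext (congrArg Prod.fst h)
    rcases unitLoop_eq_unitLoop (congrArg Prod.snd h) with rfl | ⟨ht, ht'⟩
    · rfl
    · exact (hends s ht).trans (hends s ht').symm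
  have : Nonempty X := ⟨Γ (0, 0)⟩
  obtain ⟨G, hGc, hG⟩ := exists_continuousOn_range_of_factorsThrough
    (continuous_subtype_val.prodMap (continuous_unitLoop.comp continuous_subtype_val))
    Γ.continuous hfac
  have hrange : range (fun q : I × I => ((q.1 : ℝ), unitLoop q.2)) = Icc 0 1 ×ˢ sphere 0 1 := by
    rw [← range_unitLoop, ← Subtype.range_coe (s := Icc (0 : ℝ) 1), ← range_prodMap]
    rfl
  exact ⟨G, hrange ▸ hGc, fun s t => hG (s, t)⟩

end UnitLoop

section Cylinder

variable {M : Type*}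

theorem frontier_cylinder : frontier (Icc (0 : ℝ) 1 ×ˢ closedBall (0 : ℂ) 1) =
    Icc 0 1 ×ˢ sphere 0 1 ∪ ({0} ×ˢ closedBall 0 1 ∪ {1} ×ˢ closedBall 0 1) := by
  rw [frontier_prod_eq, closure_Icc, frontier_closedBall _ one_ne_zero,
    frontier_Icc zero_le_one, closure_closedBall, insert_eq, union_prod]

theorem exists_continuousOn_cylinder_eqOn_frontier [TopologicalSpace M] {w₀ : M}
    (hπ : Subsingleton (HomotopyGroup (Fin 2) M w₀)) {β : ℝ × ℂ → M}
    (hβ : ContinuousOn β (frontier (Icc (0 : ℝ) 1 ×ˢ closedBall (0 : ℂ) 1)))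
    (hβp : β (0, 1) = w₀) :
    ∃ H : ℝ × ℂ → M, ContinuousOn H (Icc 0 1 ×ˢ closedBall 0 1) ∧
      EqOn H β (frontier (Icc (0 : ℝ) 1 ×ˢ closedBall (0 : ℂ) 1)) := by
  have hdim : finrank ℝ (ℝ × ℂ) = Fintype.card (Fin 2) + 1 := by
    rw [finrank_prod, finrank_self, finrank_real_complex, Fintype.card_fin]
  have hint : (interior (Icc (0 : ℝ) 1 ×ˢ closedBall (0 : ℂ) 1)).Nonempty := by
    rw [interior_prod_eq, interior_Icc, interior_closedBall _ one_ne_zero]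
    exact ⟨(1 / 2, 0), ⟨by norm_num, by norm_num⟩, mem_ball_self one_pos⟩
  refine ((convex_Icc 0 1).prod (convex_closedBall 0 1)).exists_continuousOn_eqOn_frontier hdim
    (isCompact_Icc.prod (isCompact_closedBall 0 1)) hint hπ hβ ?_ hβp
  rw [frontier_cylinder]
  exact .inl ⟨⟨le_rfl, zero_le_one⟩, by simp⟩

open Classical in
noncomputable def cylinderBoundaryMap (f₀ f₁ : ℂ → M) (G : ℝ × ℂ → M) (p : ℝ × ℂ) : M :=
  if p.2 ∈ sphere (0 : ℂ) 1 then G p else if p.1 = 0 then f₀ p.2 else f₁ p.2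

variable {f₀ f₁ : ℂ → M} {G : ℝ × ℂ → M}

theorem cylinderBoundaryMap_of_mem_sphere {p : ℝ × ℂ} (hp : p.2 ∈ sphere (0 : ℂ) 1) :
    cylinderBoundaryMap f₀ f₁ G p = G p :=
  if_pos hp

theorem cylinderBoundaryMap_zero (h₀ : ∀ ζ ∈ sphere (0 : ℂ) 1, G (0, ζ) = f₀ ζ) (ζ : ℂ) :
    cylinderBoundaryMap f₀ f₁ G (0, ζ) = f₀ ζ := by
  unfold cylinderBoundaryMap
  split_ifs with hζ h00
  exacts [h₀ ζ hζ, rfl, absurd rfl h00]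

theorem cylinderBoundaryMap_one (h₁ : ∀ ζ ∈ sphere (0 : ℂ) 1, G (1, ζ) = f₁ ζ) (ζ : ℂ) :
    cylinderBoundaryMap f₀ f₁ G (1, ζ) = f₁ ζ := by
  unfold cylinderBoundaryMap
  split_ifs with hζ h10
  exacts [h₁ ζ hζ, absurd h10 one_ne_zero, rfl]

theorem continuousOn_cylinderBoundaryMap [TopologicalSpace M]
    (hf₀ : ContinuousOn f₀ (closedBall 0 1)) (hf₁ : ContinuousOn f₁ (closedBall 0 1))
    (hG : ContinuousOn G (Icc 0 1 ×ˢ sphere 0 1)) (h₀ : ∀ ζ ∈ sphere (0 : ℂ) 1, G (0, ζ) = f₀ ζ)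
    (h₁ : ∀ ζ ∈ sphere (0 : ℂ) 1, G (1, ζ) = f₁ ζ) :
    ContinuousOn (cylinderBoundaryMap f₀ f₁ G)
      (frontier (Icc (0 : ℝ) 1 ×ˢ closedBall (0 : ℂ) 1)) := by
  have hside : ContinuousOn (cylinderBoundaryMap f₀ f₁ G) (Icc 0 1 ×ˢ sphere 0 1) :=
    hG.congr fun p hp => cylinderBoundaryMap_of_mem_sphere hp.2
  have hbot : ContinuousOn (cylinderBoundaryMap f₀ f₁ G) ({0} ×ˢ closedBall 0 1) := by
    refine (hf₀.comp continuousOn_snd fun p hp => hp.2).congr ?_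
    rintro ⟨t, ζ⟩ ⟨rfl : t = 0, -⟩
    exact cylinderBoundaryMap_zero h₀ ζ
  have htop : ContinuousOn (cylinderBoundaryMap f₀ f₁ G) ({1} ×ˢ closedBall 0 1) := by
    refine (hf₁.comp continuousOn_snd fun p hp => hp.2).congr ?_
    rintro ⟨t, ζ⟩ ⟨rfl : t = 1, -⟩
    exact cylinderBoundaryMap_one h₁ ζ
  have hclosed (a : ℝ) : IsClosed ({a} ×ˢ closedBall (0 : ℂ) 1) :=
    isClosed_singleton.prod isClosed_closedBall
  rw [frontier_cylinder]
  exact hside.union_of_isClosed (hbot.union_of_isClosed htop (hclosed 0) (hclosed 1))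
    (isClosed_Icc.prod isClosed_sphere) ((hclosed 0).union (hclosed 1))

end Cylinder

theorem boundary_map_injective_of_pi2_trivial_general
    (M : Type*) [TopologicalSpace M] (W : Set M) (w₀ : M) (hw₀ : w₀ ∈ W)
    (hπ2 : Subsingleton (HomotopyGroup (Fin 2) M w₀))
    (f₀ f₁ : ℂ → M)
    (hf₀c : ContinuousOn f₀ (closedBall (0:ℂ) 1))
    (hf₁c : ContinuousOn f₁ (closedBall (0:ℂ) 1))
    (γ₀ γ₁ : Path (⟨w₀, hw₀⟩ : W) (⟨w₀, hw₀⟩ : W))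
    (hγ₀ : ∀ t : unitInterval, (γ₀ t : M) = f₀ (unitLoop t))
    (hγ₁ : ∀ t : unitInterval, (γ₁ t : M) = f₁ (unitLoop t))
    (hhom : γ₀.Homotopic γ₁) :
    ∃ H : ℝ × ℂ → M,
      ContinuousOn H (Icc (0:ℝ) 1 ×ˢ closedBall (0:ℂ) 1) ∧
      (∀ ζ ∈ closedBall (0:ℂ) 1, H (0, ζ) = f₀ ζ) ∧
      (∀ ζ ∈ closedBall (0:ℂ) 1, H (1, ζ) = f₁ ζ) ∧
      ∀ t ∈ Icc (0:ℝ) 1, (∀ ζ ∈ sphere (0:ℂ) 1, H (t, ζ) ∈ W) ∧ H (t, 1) = w₀ := by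
  obtain ⟨Γ⟩ := hhom
  obtain ⟨G, hGc, hG⟩ := Γ.toContinuousMap.exists_continuousOn_comp_unitLoop fun s => by simp
  have hG₀ : ∀ ζ ∈ sphere (0 : ℂ) 1, (G (0, ζ) : M) = f₀ ζ := by
    rw [← range_unitLoop, forall_mem_range]
    exact fun t => (congrArg Subtype.val ((hG 0 t).trans (Γ.apply_zero t))).trans (hγ₀ t)
  have hG₁ : ∀ ζ ∈ sphere (0 : ℂ) 1, (G (1, ζ) : M) = f₁ ζ := by
    rw [← range_unitLoop, forall_mem_range]
    exact fun t => (congrArg Subtype.val ((hG 1 t).trans (Γ.apply_one t))).trans (hγ₁ t)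
  have hbase (t : ℝ) (ht : t ∈ Icc (0 : ℝ) 1) :
      cylinderBoundaryMap f₀ f₁ (Subtype.val ∘ G) (t, 1) = w₀ := by
    rw [cylinderBoundaryMap_of_mem_sphere (by simp), ← unitLoop_zero]
    exact congrArg Subtype.val ((hG ⟨t, ht⟩ 0).trans (Γ.source _))
  obtain ⟨H, hHc, hHβ⟩ := exists_continuousOn_cylinder_eqOn_frontier hπ2
    (continuousOn_cylinderBoundaryMap hf₀c hf₁c (continuous_subtype_val.comp_continuousOn hGc)
      hG₀ hG₁) (hbase 0 ⟨le_rfl, zero_le_one⟩)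
  rw [frontier_cylinder] at hHβ
  refine ⟨H, hHc, fun ζ hζ => ?_, fun ζ hζ => ?_, fun t ht => ⟨fun ζ hζ => ?_, ?_⟩⟩
  · rw [hHβ (.inr (.inl ⟨mem_singleton 0, hζ⟩)), cylinderBoundaryMap_zero hG₀]
  · rw [hHβ (.inr (.inr ⟨mem_singleton 1, hζ⟩)), cylinderBoundaryMap_one hG₁]
  · rw [hHβ (.inl ⟨ht, hζ⟩), cylinderBoundaryMap_of_mem_sphere hζ]
    exact (G _).2
  · rw [hHβ (.inl ⟨ht, by simp⟩)]
    exact hbase t ht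

/-- **Theorem 6.2(2)**: if `π₂(M, w₀)` is trivial and `f₀, f₁ ∈ ℛ_{w₀}(W, M)` have
boundary loops that are homotopic rel endpoints through loops in `W`, then `f₀` and `f₁`
are homotopic in `ℛ_{w₀}(W, M)`; i.e. the boundary-loop homomorphism
`δ₂ : ρ₁(W, M, w₀) → π₁(W, w₀)` is injective when `π₂(M, w₀) = 0`. -/
theorem boundary_map_injective_of_pi2_trivial
    (M : Type*) [TopologicalSpace M] (W : Set M) (w₀ : M) (hw₀ : w₀ ∈ W)
    (hπ2 : Subsingleton (HomotopyGroup (Fin 2) M w₀))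
    (f₀ f₁ : ℂ → M)
    (hf₀c : ContinuousOn f₀ (closedBall (0:ℂ) 1))
    (hf₀W : ∀ ζ ∈ sphere (0:ℂ) 1, f₀ ζ ∈ W) (hf₀1 : f₀ 1 = w₀)
    (hf₁c : ContinuousOn f₁ (closedBall (0:ℂ) 1))
    (hf₁W : ∀ ζ ∈ sphere (0:ℂ) 1, f₁ ζ ∈ W) (hf₁1 : f₁ 1 = w₀)
    (γ₀ γ₁ : Path (⟨w₀, hw₀⟩ : W) (⟨w₀, hw₀⟩ : W))
    (hγ₀ : ∀ t : unitInterval, (γ₀ t : M) = f₀ (unitLoop t))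
    (hγ₁ : ∀ t : unitInterval, (γ₁ t : M) = f₁ (unitLoop t))
    (hhom : γ₀.Homotopic γ₁) :
    ∃ H : ℝ × ℂ → M,
      ContinuousOn H (Icc (0:ℝ) 1 ×ˢ closedBall (0:ℂ) 1) ∧
      (∀ ζ ∈ closedBall (0:ℂ) 1, H (0, ζ) = f₀ ζ) ∧
      (∀ ζ ∈ closedBall (0:ℂ) 1, H (1, ζ) = f₁ ζ) ∧
      ∀ t ∈ Icc (0:ℝ) 1, (∀ ζ ∈ sphere (0:ℂ) 1, H (t, ζ) ∈ W) ∧ H (t, 1) = w₀ :=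
  boundary_map_injective_of_pi2_trivial_general M W w₀ hw₀ hπ2 f₀ f₁ hf₀c hf₁c γ₀ γ₁ hγ₀ hγ₁ hhom
end

section
/- Let 0 < s < 1 < r and let A_{s,r} = {z ∈ ℂ : s < |z| < r}. Let f : ℂ → ℂ be continuous on 𝔻̄ and holomorphic on 𝔻 with f(𝕋) ⊆ A_{s,r} and f(1) = 1. Then there exist a natural number m and a continuous map H : [0,1] × 𝔻̄ → ℂ such that H(0, ζ) = f(ζ) and H(1, ζ) = ζ^m for all ζ ∈ 𝔻̄, and for every t ∈ [0,1] the map H(t, ·) is continuous on 𝔻̄, holomorphic on 𝔻, satisfies H(t, 𝕋) ⊆ A_{s,r} and H(t, 1) = 1. In other words, every element of 𝒜₁(A_{s,r}, ℂ) is h-homotopic to the monomial ζ ↦ ζ^m for some m ∈ ℕ. -/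
open Complex ComplexConjugate Metric Set Polynomial

/-!
Three h-homotopies, glued. Dilating, `ζ ↦ f (u ζ) / f u` for `u` from `1` down to some `τ < 1`,
replaces `f` by a map holomorphic on a disk of radius `> 1`; its Taylor polynomials `P` converge
uniformly on `𝔻̄`, and the linear homotopy to `P` normalised by its value at `1` stays in `𝒜₁`.
Both steps rest on one stability fact: if `K t` is uniformly close on `𝕋` to `F ∈ 𝒜₁`, then
`K t / K t 1` stays in `𝒜₁`, because `z / w` remains in the open annulus for `z` near the compact
set `F(𝕋)` and `w` near `1`. Finally a polynomial `Q` without zeros on `𝕋` factors on `𝔻̄` as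
`κ · exp Φ · B` with `B` the Blaschke product of its zeros in `𝔻`. Scaling `Φ` and the zeros of `B`
by `1 - t` ends at `ζ ^ m`, and on `𝕋` the modulus along the way is `|Q / Q 1| ^ (1 - t)`, which
stays between `s` and `r` because `s < 1 < r`.
-/

/-- `F ∈ 𝒜₁(A_{s,r}, ℂ)`. -/
structure IsAnnulusDisk (s r : ℝ) (F : ℂ → ℂ) : Prop where
  continuousOn : ContinuousOn F (closedBall 0 1)
  differentiableOn : DifferentiableOn ℂ F (ball 0 1)
  mem_annulus : ∀ ζ ∈ sphere (0 : ℂ) 1, s < ‖F ζ‖ ∧ ‖F ζ‖ < r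
  map_one : F 1 = 1

/-- `F` and `G` are h-homotopic in `𝒜₁(A_{s,r}, ℂ)`. -/
def AnnulusDiskHomotopic (s r : ℝ) (F G : ℂ → ℂ) : Prop :=
  ∃ H : ℝ × ℂ → ℂ, ContinuousOn H (Icc 0 1 ×ˢ closedBall 0 1) ∧
    (∀ t ∈ Icc (0 : ℝ) 1, IsAnnulusDisk s r fun ζ => H (t, ζ)) ∧
    EqOn (fun ζ => H (0, ζ)) F (closedBall 0 1) ∧ EqOn (fun ζ => H (1, ζ)) G (closedBall 0 1)

theorem one_mem_closedBall_zero : (1 : ℂ) ∈ closedBall (0 : ℂ) 1 := by simp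

section

variable {s r : ℝ} {F G K : ℂ → ℂ}

theorem IsAnnulusDisk.congr (hF : IsAnnulusDisk s r F) (h : EqOn F G (closedBall 0 1)) :
    IsAnnulusDisk s r G where
  continuousOn := hF.continuousOn.congr h.symm
  differentiableOn := hF.differentiableOn.congr (h.symm.mono ball_subset_closedBall)
  mem_annulus ζ hζ := h (sphere_subset_closedBall hζ) ▸ hF.mem_annulus ζ hζ
  map_one := h (one_mem_closedBall_zero) ▸ hF.map_one

namespace AnnulusDiskHomotopic

theorem congr {F' G' : ℂ → ℂ} (h : AnnulusDiskHomotopic s r F G)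
    (hF : EqOn F F' (closedBall 0 1)) (hG : EqOn G G' (closedBall 0 1)) :
    AnnulusDiskHomotopic s r F' G' :=
  let ⟨H, hc, hH, h0, h1⟩ := h
  ⟨H, hc, hH, h0.trans hF, h1.trans hG⟩

theorem isAnnulusDisk_right (h : AnnulusDiskHomotopic s r F G) : IsAnnulusDisk s r G :=
  let ⟨_, _, hH, _, h1⟩ := h
  (hH 1 (right_mem_Icc.2 zero_le_one)).congr h1

theorem trans (h₁ : AnnulusDiskHomotopic s r F G) (h₂ : AnnulusDiskHomotopic s r G K) :
    AnnulusDiskHomotopic s r F K := by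
  obtain ⟨H₁, hc₁, hH₁, h0₁, h1₁⟩ := h₁
  obtain ⟨H₂, hc₂, hH₂, h0₂, h1₂⟩ := h₂
  have hsplit : Icc (0 : ℝ) 1 ×ˢ closedBall (0 : ℂ) 1 =
      Icc 0 (1 / 2) ×ˢ closedBall 0 1 ∪ Icc (1 / 2) 1 ×ˢ closedBall 0 1 := by
    rw [← union_prod, Icc_union_Icc_eq_Icc] <;> norm_num
  refine ⟨fun q => if q.1 ≤ 1 / 2 then H₁ (2 * q.1, q.2) else H₂ (2 * q.1 - 1, q.2),
    ?_, fun t ht => ?_, fun ζ hζ => by simpa using h0₁ hζ, fun ζ hζ => by norm_num [h1₂ hζ]⟩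
  · rw [hsplit]
    refine ContinuousOn.union_of_isClosed ?_ ?_ (isClosed_Icc.prod isClosed_closedBall)
      (isClosed_Icc.prod isClosed_closedBall)
    · refine (hc₁.comp (f := fun q : ℝ × ℂ => (2 * q.1, q.2)) (by fun_prop) ?_).congr ?_
      · rintro ⟨t, ζ⟩ ⟨⟨ht0, ht1⟩, hζ⟩
        exact ⟨⟨by linarith, by linarith⟩, hζ⟩
      · rintro ⟨t, ζ⟩ ⟨⟨-, ht⟩, -⟩
        exact if_pos ht
    · refine (hc₂.comp (f := fun q : ℝ × ℂ => (2 * q.1 - 1, q.2)) (by fun_prop) ?_).congr ?_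
      · rintro ⟨t, ζ⟩ ⟨⟨ht0, ht1⟩, hζ⟩
        exact ⟨⟨by linarith, by linarith⟩, hζ⟩
      · rintro ⟨t, ζ⟩ ⟨⟨ht0, -⟩, hζ⟩
        by_cases ht : t ≤ 1 / 2
        · obtain rfl : t = 1 / 2 := le_antisymm ht ht0
          norm_num [h1₁ hζ, h0₂ hζ]
        · exact if_neg ht
  · by_cases h : t ≤ 1 / 2
    · simpa only [h, if_true] using hH₁ (2 * t) ⟨by linarith [ht.1], by linarith⟩
    · simpa only [h, if_false] using hH₂ (2 * t - 1) ⟨by linarith, by linarith [ht.2]⟩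

end AnnulusDiskHomotopic

theorem IsCompact.exists_pos_forall_lt_norm_div_lt {S : Set ℂ} (hS : IsCompact S)
    (hF : ContinuousOn F S) (hFS : ∀ ζ ∈ S, s < ‖F ζ‖ ∧ ‖F ζ‖ < r) :
    ∃ ε > 0, ∀ ζ ∈ S, ∀ z w : ℂ, ‖z - F ζ‖ < ε → ‖w - 1‖ < ε →
      w ≠ 0 ∧ s < ‖z / w‖ ∧ ‖z / w‖ < r := by
  set U : Set (ℂ × ℂ) := {p | p.2 ≠ 0} ∩ (fun p => ‖p.1 / p.2‖) ⁻¹' Ioo s r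
  have hU : IsOpen U := ContinuousOn.isOpen_inter_preimage
    (continuousOn_fst.div continuousOn_snd fun _ hp => hp).norm
    (isOpen_ne_fun continuous_snd continuous_const) isOpen_Ioo
  have hSU : (fun ζ => (F ζ, (1 : ℂ))) '' S ⊆ U := by
    rintro _ ⟨ζ, hζ, rfl⟩
    simpa [U] using hFS ζ hζ
  obtain ⟨ε, hε, hεU⟩ := (hS.image_of_continuousOn (hF.prodMk continuousOn_const)
    ).exists_thickening_subset_open hU hSU
  refine ⟨ε, hε, fun ζ hζ z w hz hw => ?_⟩
  have hzw : (z, w) ∈ U := hεU (mem_thickening_iff.2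
    ⟨_, mem_image_of_mem _ hζ, by simpa [Prod.dist_eq, dist_eq_norm] using ⟨hz, hw⟩⟩)
  exact ⟨hzw.1, hzw.2⟩

theorem IsAnnulusDisk.exists_pos_annulusDiskHomotopic_of_norm_sub_lt
    (hF : IsAnnulusDisk s r F) :
    ∃ ε > 0, ∀ K : ℝ × ℂ → ℂ, ContinuousOn K (Icc 0 1 ×ˢ closedBall 0 1) →
      (∀ t ∈ Icc (0 : ℝ) 1, DifferentiableOn ℂ (fun ζ => K (t, ζ)) (ball 0 1)) →
      (∀ t ∈ Icc (0 : ℝ) 1, ∀ ζ ∈ sphere (0 : ℂ) 1, ‖K (t, ζ) - F ζ‖ < ε) →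
      EqOn (fun ζ => K (0, ζ)) F (closedBall 0 1) →
      AnnulusDiskHomotopic s r F fun ζ => K (1, ζ) / K (1, 1) := by
  obtain ⟨ε, hε, hdiv⟩ := (isCompact_sphere (0 : ℂ) 1).exists_pos_forall_lt_norm_div_lt
    (hF.continuousOn.mono sphere_subset_closedBall) hF.mem_annulus
  refine ⟨ε, hε, fun K hKc hKd hKF hK0 => ?_⟩
  have h1 : (1 : ℂ) ∈ sphere (0 : ℂ) 1 := by simp
  have hK1 : ∀ t ∈ Icc (0 : ℝ) 1, ‖K (t, 1) - 1‖ < ε := fun t ht => by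
    simpa [hF.map_one] using hKF t ht 1 h1
  have hK1ne : ∀ t ∈ Icc (0 : ℝ) 1, K (t, 1) ≠ 0 := fun t ht =>
    (hdiv 1 h1 _ _ (hKF t ht 1 h1) (hK1 t ht)).1
  refine ⟨fun q => K q / K (q.1, 1), ?_, fun t ht => ?_, ?_, fun _ _ => rfl⟩
  · exact hKc.div (hKc.comp (f := fun q : ℝ × ℂ => (q.1, 1)) (by fun_prop)
      fun q hq => ⟨hq.1, one_mem_closedBall_zero⟩) fun q hq => hK1ne q.1 hq.1
  · dsimp only
    refine ⟨?_, ?_, fun ζ hζ => ?_, ?_⟩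
    · exact (hKc.uncurry_left (f := fun t ζ => K (t, ζ)) t ht).div_const _
    · exact (hKd t ht).div_const _
    · exact (hdiv ζ hζ _ _ (hKF t ht ζ hζ) (hK1 t ht)).2
    · exact div_self (hK1ne t ht)
  · intro ζ hζ
    simp only [hK0 hζ, hK0 one_mem_closedBall_zero, hF.map_one, div_one]

theorem norm_ofReal_mul_le {u : ℝ} (hu : u ∈ Icc (0 : ℝ) 1) (ζ : ℂ) :
    ‖(u : ℂ) * ζ‖ ≤ ‖ζ‖ := by
  rw [norm_mul, norm_real, Real.norm_of_nonneg hu.1]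
  exact mul_le_of_le_one_left (norm_nonneg ζ) hu.2

theorem IsAnnulusDisk.exists_annulusDiskHomotopic_differentiableOn (hF : IsAnnulusDisk s r F) :
    ∃ G : ℂ → ℂ, ∃ R > 1, DifferentiableOn ℂ G (closedBall 0 R) ∧
      AnnulusDiskHomotopic s r F G := by
  obtain ⟨ε, hε, hpert⟩ := hF.exists_pos_annulusDiskHomotopic_of_norm_sub_lt
  obtain ⟨δ, hδ, hFδ⟩ := Metric.uniformContinuousOn_iff.1
    ((isCompact_closedBall (0 : ℂ) 1).uniformContinuousOn_of_continuous hF.continuousOn) ε hε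
  set τ : ℝ := max (1 / 2) (1 - δ / 2)
  have hτ0 : 0 < τ := lt_max_of_lt_left (by norm_num)
  have hτ1 : τ < 1 := max_lt (by norm_num) (by linarith)
  have hτδ : 1 - τ < δ := by linarith [le_max_right (1 / 2) (1 - δ / 2)]
  have hu : ∀ t ∈ Icc (0 : ℝ) 1, 1 - t * (1 - τ) ∈ Icc τ 1 := fun t ht =>
    ⟨by nlinarith [ht.2], by nlinarith [ht.1]⟩
  have hu' : ∀ t ∈ Icc (0 : ℝ) 1, 1 - t * (1 - τ) ∈ Icc (0 : ℝ) 1 := fun t ht =>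
    ⟨hτ0.le.trans (hu t ht).1, (hu t ht).2⟩
  obtain ⟨R, hR1, hRτ⟩ := exists_between (one_lt_inv_iff₀.2 ⟨hτ0, hτ1⟩)
  refine ⟨fun ζ => F (τ * ζ) / F τ, R, hR1, ?_,
    (hpert (fun q => F (((1 - q.1 * (1 - τ) : ℝ) : ℂ) * q.2)) ?_ ?_ ?_ ?_).congr
      (eqOn_refl _ _) fun ζ _ => by simp⟩
  · refine (hF.differentiableOn.comp (differentiableOn_id.const_mul _)
      fun ζ hζ => ?_).div_const _
    rw [mem_closedBall_zero_iff] at hζ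
    rw [mem_ball_zero_iff, norm_mul, norm_real, Real.norm_of_nonneg hτ0.le]
    calc τ * ‖ζ‖ ≤ τ * R := by gcongr
      _ < τ * τ⁻¹ := by gcongr
      _ = 1 := mul_inv_cancel₀ hτ0.ne'
  · exact hF.continuousOn.comp (by fun_prop) fun q hq => mem_closedBall_zero_iff.2
      ((norm_ofReal_mul_le (hu' q.1 hq.1) q.2).trans (mem_closedBall_zero_iff.1 hq.2))
  · exact fun t ht => hF.differentiableOn.comp
      (f := fun ζ => ((1 - t * (1 - τ) : ℝ) : ℂ) * ζ) (by fun_prop) fun ζ hζ =>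
        mem_ball_zero_iff.2 ((norm_ofReal_mul_le (hu' t ht) ζ).trans_lt (mem_ball_zero_iff.1 hζ))
  · intro t ht ζ hζ
    rw [← dist_eq_norm]
    refine hFδ _ ?_ _ (sphere_subset_closedBall hζ) ?_
    · exact mem_closedBall_zero_iff.2 ((norm_ofReal_mul_le (hu' t ht) ζ).trans
        (mem_sphere_zero_iff_norm.1 hζ).le)
    · rw [dist_eq_norm, ← sub_one_mul, norm_mul, mem_sphere_zero_iff_norm.1 hζ, mul_one,
        ← ofReal_one, ← ofReal_sub, norm_real, Real.norm_of_nonpos (by linarith [(hu t ht).2])]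
      linarith [(hu t ht).1]
  · intro ζ _
    simp

theorem DifferentiableOn.exists_polynomial_norm_sub_lt {g : ℂ → ℂ} {ρ R : ℝ} (hρ : 0 ≤ ρ)
    (hρR : ρ < R) (hg : DifferentiableOn ℂ g (closedBall 0 R)) {ε : ℝ} (hε : 0 < ε) :
    ∃ P : ℂ[X], ∀ ζ ∈ closedBall (0 : ℂ) ρ, ‖g ζ - P.eval ζ‖ < ε := by
  have hR : 0 < R := hρ.trans_lt hρR
  have hps := (Real.coe_toNNReal R hR.le ▸ hg).hasFPowerSeriesOnBall (Real.toNNReal_pos.2 hR)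
  obtain ⟨ρ', hρρ', hρ'R⟩ := exists_between hρR
  have hlt : ((ρ'.toNNReal : NNReal) : ENNReal) < (R.toNNReal : ENNReal) := by
    rw [ENNReal.coe_lt_coe, Real.toNNReal_lt_toNNReal_iff hR]
    exact hρ'R
  obtain ⟨n, hn⟩ := (Metric.tendstoUniformlyOn_iff.1 (hps.tendstoUniformlyOn hlt) ε hε).exists
  refine ⟨∑ k ∈ Finset.range n, C ((cauchyPowerSeries g 0 R.toNNReal).coeff k) * X ^ k,
    fun ζ hζ => ?_⟩
  have hζ' : ζ ∈ ball (0 : ℂ) ρ'.toNNReal := by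
    rw [mem_ball_zero_iff, Real.coe_toNNReal _ (hρ.trans hρρ'.le)]
    exact (mem_closedBall_zero_iff.1 hζ).trans_lt hρρ'
  have hsum :
      (∑ k ∈ Finset.range n, C ((cauchyPowerSeries g 0 R.toNNReal).coeff k) * X ^ k).eval ζ =
        (cauchyPowerSeries g 0 R.toNNReal).partialSum n ζ := by
    simp only [FormalMultilinearSeries.partialSum, eval_finsetSum, eval_mul, eval_C, eval_pow,
      eval_X, FormalMultilinearSeries.apply_eq_pow_smul_coeff, smul_eq_mul, mul_comm]
  simpa only [hsum, dist_eq_norm, zero_add] using hn ζ hζ'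

theorem IsAnnulusDisk.exists_annulusDiskHomotopic_polynomial (hG : IsAnnulusDisk s r G) {R : ℝ}
    (hR : 1 < R) (hGR : DifferentiableOn ℂ G (closedBall 0 R)) :
    ∃ P : ℂ[X], AnnulusDiskHomotopic s r G fun ζ => P.eval ζ / P.eval 1 := by
  obtain ⟨ε, hε, hpert⟩ := hG.exists_pos_annulusDiskHomotopic_of_norm_sub_lt
  obtain ⟨P, hP⟩ := hGR.exists_polynomial_norm_sub_lt zero_le_one hR hε
  refine ⟨P, (hpert (fun q => (1 - q.1 : ℂ) * G q.2 + q.1 * P.eval q.2) ?_ ?_ ?_ ?_).congr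
    (eqOn_refl _ _) fun ζ _ => by simp⟩
  · exact ((by fun_prop : Continuous fun q : ℝ × ℂ => (1 - q.1 : ℂ)).continuousOn.mul
      (hG.continuousOn.comp continuousOn_snd fun q hq => hq.2)).add (by fun_prop)
  · intro t _
    dsimp only
    exact (hG.differentiableOn.const_mul _).fun_add
      (P.differentiable.differentiableOn.const_mul _)
  · intro t ht ζ hζ
    have hζ' := sphere_subset_closedBall hζ
    calc ‖(1 - t : ℂ) * G ζ + t * P.eval ζ - G ζ‖ = t * ‖G ζ - P.eval ζ‖ := by
          rw [show (1 - t : ℂ) * G ζ + t * P.eval ζ - G ζ = -(t * (G ζ - P.eval ζ)) by ring,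
            norm_neg, norm_mul, norm_real, Real.norm_of_nonneg ht.1]
      _ ≤ ‖G ζ - P.eval ζ‖ := mul_le_of_le_one_left (norm_nonneg _) ht.2
      _ < ε := hP ζ hζ'
  · intro ζ _
    simp

section Multiset

variable {ι 𝕜 E 𝔸 : Type*} [NontriviallyNormedField 𝕜] [NormedAddCommGroup E]
  [NormedSpace 𝕜 E] [NormedCommRing 𝔸] [NormedAlgebra 𝕜 𝔸] {f : ι → E → 𝔸} {S : Set E}

theorem DifferentiableOn.multiset_prod (u : Multiset ι)
    (h : ∀ i ∈ u, DifferentiableOn 𝕜 (f i) S) :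
    DifferentiableOn 𝕜 (fun x => (u.map (f · x)).prod) S := by
  classical
  exact fun x hx => (HasFDerivWithinAt.multiset_prod fun i hi =>
    (h i hi x hx).hasFDerivWithinAt).differentiableWithinAt

theorem DifferentiableOn.multiset_sum (u : Multiset ι)
    (h : ∀ i ∈ u, DifferentiableOn 𝕜 (f i) S) :
    DifferentiableOn 𝕜 (fun x => (u.map (f · x)).sum) S := by
  induction u using Multiset.induction_on with
  | empty => simp
  | cons i u ih =>
    simpa using (h i (Multiset.mem_cons_self i u)).fun_add
      (ih fun j hj => h j (Multiset.mem_cons_of_mem hj))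

end Multiset

theorem one_sub_mul_mem_slitPlane {c ζ : ℂ} (hc : ‖c‖ < 1) (hζ : ‖ζ‖ ≤ 1) :
    1 - c * ζ ∈ slitPlane := by
  rw [sub_eq_add_neg]
  apply mem_slitPlane_of_norm_lt_one
  rw [norm_neg, norm_mul]
  exact mul_lt_one_of_nonneg_of_lt_one_left (norm_nonneg c) hc hζ

theorem differentiableOn_log_one_sub_mul {c : ℂ} (hc : ‖c‖ < 1) :
    DifferentiableOn ℂ (fun ζ => log (1 - c * ζ)) (closedBall 0 1) := fun _ hζ =>
  ((differentiableAt_const _).sub (differentiableAt_id.const_mul c)).clog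
    (one_sub_mul_mem_slitPlane hc (mem_closedBall_zero_iff.1 hζ)) |>.differentiableWithinAt

noncomputable def blaschkeFactor (a ζ : ℂ) : ℂ := (ζ - a) / (1 - conj a * ζ)

noncomputable def blaschke (A : Multiset ℂ) (ζ : ℂ) : ℂ := (A.map (blaschkeFactor · ζ)).prod

theorem one_sub_conj_mul_ne_zero {a ζ : ℂ} (ha : ‖a‖ < 1) (hζ : ‖ζ‖ ≤ 1) :
    1 - conj a * ζ ≠ 0 :=
  slitPlane_ne_zero (one_sub_mul_mem_slitPlane (by rwa [norm_conj]) hζ)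

theorem norm_blaschkeFactor {a ζ : ℂ} (ha : ‖a‖ < 1) (hζ : ‖ζ‖ = 1) :
    ‖blaschkeFactor a ζ‖ = 1 := by
  have hζζ : ζ * conj ζ = 1 := by rw [mul_conj, normSq_eq_norm_sq, hζ]; norm_num
  have hden : 1 - conj a * ζ = ζ * conj (ζ - a) := by rw [map_sub, mul_sub, hζζ]; ring
  have hne : ζ - a ≠ 0 := sub_ne_zero.2 fun h => by rw [h] at hζ; linarith
  rw [blaschkeFactor, hden, norm_div, norm_mul, norm_conj, hζ, one_mul,
    div_self (norm_ne_zero_iff.2 hne)]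

theorem norm_blaschke {A : Multiset ℂ} (hA : ∀ a ∈ A, ‖a‖ < 1) {ζ : ℂ} (hζ : ‖ζ‖ = 1) :
    ‖blaschke A ζ‖ = 1 := by
  rw [blaschke, ← normHom_apply, map_multiset_prod, Multiset.map_map]
  exact Multiset.prod_eq_one fun x hx => by
    obtain ⟨a, ha, rfl⟩ := Multiset.mem_map.1 hx
    exact norm_blaschkeFactor (hA a ha) hζ

theorem blaschke_replicate_zero (n : ℕ) (ζ : ℂ) :
    blaschke (Multiset.replicate n 0) ζ = ζ ^ n := by
  simp [blaschke, blaschkeFactor]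

theorem differentiableOn_blaschke {A : Multiset ℂ} (hA : ∀ a ∈ A, ‖a‖ < 1) :
    DifferentiableOn ℂ (blaschke A) (closedBall 0 1) :=
  DifferentiableOn.multiset_prod A fun a ha => (differentiableOn_id.sub_const a).div
    (by fun_prop) fun ζ hζ => one_sub_conj_mul_ne_zero (hA a ha) (mem_closedBall_zero_iff.1 hζ)

theorem continuousOn_blaschke_map_mul {A : Multiset ℂ} (hA : ∀ a ∈ A, ‖a‖ < 1) :
    ContinuousOn (fun p : ℂ × ℂ => blaschke (A.map (p.1 * ·)) p.2)
      (closedBall 0 1 ×ˢ closedBall 0 1) := by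
  simp only [blaschke, Multiset.map_map, Function.comp_def]
  refine continuousOn_multiset_prod A fun a ha => ContinuousOn.div (by fun_prop) (by fun_prop) ?_
  rintro ⟨c, ζ⟩ ⟨hc, hζ⟩
  rw [mem_closedBall_zero_iff] at hc hζ
  refine one_sub_conj_mul_ne_zero ?_ hζ
  rw [norm_mul]
  exact mul_lt_one_of_nonneg_of_lt_one_right hc (norm_nonneg _) (hA a ha)

theorem lt_exp_mul_and_exp_mul_lt {x σ : ℝ} (hs : s < 1) (hr : 1 < r)
    (hx : s < Real.exp x ∧ Real.exp x < r) (hσ : σ ∈ Icc (0 : ℝ) 1) :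
    s < Real.exp (σ * x) ∧ Real.exp (σ * x) < r := by
  rcases le_total 0 x with h | h
  · exact ⟨hs.trans_le (Real.one_le_exp (mul_nonneg hσ.1 h)),
      (Real.exp_le_exp.2 (mul_le_of_le_one_left h hσ.2)).trans_lt hx.2⟩
  · exact ⟨hx.1.trans_le (Real.exp_le_exp.2 (by nlinarith [hσ.2])),
      (Real.exp_le_one_iff.2 (mul_nonpos_of_nonneg_of_nonpos hσ.1 h)).trans_lt hr⟩

theorem annulusDiskHomotopic_exp_mul_blaschke (hs : s < 1) (hr : 1 < r) {Φ : ℂ → ℂ}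
    (hΦc : ContinuousOn Φ (closedBall 0 1)) (hΦd : DifferentiableOn ℂ Φ (ball 0 1))
    {A : Multiset ℂ} (hA : ∀ a ∈ A, ‖a‖ < 1)
    (hΦ : ∀ ζ ∈ sphere (0 : ℂ) 1, s < ‖exp (Φ ζ - Φ 1)‖ ∧ ‖exp (Φ ζ - Φ 1)‖ < r) :
    AnnulusDiskHomotopic s r (fun ζ => exp (Φ ζ - Φ 1) * (blaschke A ζ / blaschke A 1))
      (· ^ Multiset.card A) := by
  set c : ℝ → ℂ := fun t => ((1 - t : ℝ) : ℂ)
  have hc : Continuous c := by fun_prop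
  have hcI : ∀ t ∈ Icc (0 : ℝ) 1, c t ∈ closedBall 0 1 := fun t ht => by
    rw [mem_closedBall_zero_iff, norm_real, Real.norm_of_nonneg (by linarith [ht.2])]
    linarith [ht.1]
  have hcA : ∀ t ∈ Icc (0 : ℝ) 1, ∀ a ∈ A.map (c t * ·), ‖a‖ < 1 := fun t ht _ hb => by
    obtain ⟨a, ha, rfl⟩ := Multiset.mem_map.1 hb
    rw [norm_mul]
    exact mul_lt_one_of_nonneg_of_lt_one_right (mem_closedBall_zero_iff.1 (hcI t ht))
      (norm_nonneg _) (hA a ha)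
  have hB1 : ∀ t ∈ Icc (0 : ℝ) 1, blaschke (A.map (c t * ·)) 1 ≠ 0 := fun t ht =>
    norm_ne_zero_iff.1 (by rw [norm_blaschke (hcA t ht) norm_one]; exact one_ne_zero)
  have hBc := continuousOn_blaschke_map_mul hA
  set H : ℝ × ℂ → ℂ := fun q => exp (c q.1 * (Φ q.2 - Φ 1)) *
    (blaschke (A.map (c q.1 * ·)) q.2 / blaschke (A.map (c q.1 * ·)) 1)
  have hHc : ContinuousOn H (Icc 0 1 ×ˢ closedBall 0 1) := by
    refine ContinuousOn.mul ?_ (ContinuousOn.div ?_ ?_ fun q hq => hB1 q.1 hq.1)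
    · exact ((hc.comp continuous_fst).continuousOn.mul
        ((hΦc.comp continuousOn_snd fun q hq => hq.2).sub continuousOn_const)).cexp
    · exact hBc.comp (f := fun q : ℝ × ℂ => (c q.1, q.2)) (by fun_prop)
        fun q hq => ⟨hcI q.1 hq.1, hq.2⟩
    · exact hBc.comp (f := fun q : ℝ × ℂ => (c q.1, 1)) (by fun_prop)
        fun q hq => ⟨hcI q.1 hq.1, by simp⟩
  refine ⟨H, hHc, fun t ht => ⟨hHc.uncurry_left (f := fun t ζ => H (t, ζ)) t ht, ?_,
    fun ζ hζ => ?_, ?_⟩, fun ζ _ => by simp [H, c],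
    fun ζ _ => by simp [H, c, blaschke_replicate_zero]⟩
  · dsimp only [H]
    exact (((hΦd.sub_const _).const_mul _).cexp).fun_mul
      (((differentiableOn_blaschke (hcA t ht)).mono ball_subset_closedBall).div_const _)
  · have hζ' := hΦ ζ hζ
    rw [norm_exp] at hζ'
    rw [norm_mul, norm_div, norm_blaschke (hcA t ht) (mem_sphere_zero_iff_norm.1 hζ),
      norm_blaschke (hcA t ht) norm_one, div_one, mul_one, norm_exp, re_ofReal_mul]
    exact lt_exp_mul_and_exp_mul_lt hs hr hζ' ⟨by linarith [ht.2], by linarith [ht.1]⟩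
  · simp [H, div_self (hB1 t ht)]

theorem Polynomial.exists_eval_eq_mul_exp_mul_blaschke {Q : ℂ[X]}
    (hQ : ∀ ζ ∈ sphere (0 : ℂ) 1, Q.eval ζ ≠ 0) :
    ∃ (κ : ℂ) (Φ : ℂ → ℂ) (A : Multiset ℂ), DifferentiableOn ℂ Φ (closedBall 0 1) ∧
      (∀ a ∈ A, ‖a‖ < 1) ∧
        ∀ ζ ∈ closedBall (0 : ℂ) 1, Q.eval ζ = κ * exp (Φ ζ) * blaschke A ζ := by
  classical
  have hQ0 : Q ≠ 0 := fun h => hQ 1 (by simp) (by simp [h])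
  set A := Q.roots.filter (‖·‖ < 1)
  set B := Q.roots.filter (¬ ‖·‖ < 1)
  have hA : ∀ a ∈ A, ‖a‖ < 1 := fun a ha => (Multiset.mem_filter.1 ha).2
  have hB : ∀ b ∈ B, 1 < ‖b‖ := fun b hb => by
    rw [Multiset.mem_filter, mem_roots hQ0] at hb
    exact lt_of_le_of_ne (not_lt.1 hb.2) fun h => hQ b (by simpa using h.symm) hb.1
  set C := B.map (·⁻¹) + A.map conj
  have hC : ∀ c ∈ C, ‖c‖ < 1 := by
    simp only [C, Multiset.mem_add, Multiset.mem_map]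
    rintro _ (⟨b, hb, rfl⟩ | ⟨a, ha, rfl⟩)
    · rw [norm_inv]
      exact inv_lt_one_of_one_lt₀ (hB b hb)
    · rw [norm_conj]
      exact hA a ha
  refine ⟨Q.leadingCoeff * (B.map (-·)).prod, fun ζ => (C.map fun c => log (1 - c * ζ)).sum, A,
    DifferentiableOn.multiset_sum C fun c hc => differentiableOn_log_one_sub_mul (hC c hc), hA,
    fun ζ hζ => ?_⟩
  rw [mem_closedBall_zero_iff] at hζ
  have hexp : exp (C.map fun c => log (1 - c * ζ)).sum = (C.map fun c => 1 - c * ζ).prod := by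
    rw [exp_multiset_sum, Multiset.map_map]
    exact congrArg _ (Multiset.map_congr rfl fun c hc =>
      exp_log (slitPlane_ne_zero (one_sub_mul_mem_slitPlane (hC c hc) hζ)))
  have hBζ : ∀ b ∈ B, ζ - b = -b * (1 - b⁻¹ * ζ) := fun b hb => by
    have : b ≠ 0 := norm_pos_iff.1 (one_pos.trans (hB b hb))
    field_simp
    ring
  have hAζ : ∀ a ∈ A, ζ - a = (1 - conj a * ζ) * blaschkeFactor a ζ := fun a ha =>
    (mul_div_cancel₀ _ (one_sub_conj_mul_ne_zero (hA a ha) hζ)).symm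
  rw [hexp, (IsAlgClosed.splits Q).eval_eq_prod_roots,
    ← Multiset.filter_add_not (‖·‖ < 1) Q.roots, Multiset.map_add, Multiset.prod_add,
    Multiset.map_congr rfl hAζ, Multiset.map_congr rfl hBζ,
    Multiset.prod_map_mul, Multiset.prod_map_mul]
  simp only [C, blaschke, Multiset.map_add, Multiset.prod_add, Multiset.map_map,
    Function.comp_def]
  ring

theorem Polynomial.exists_annulusDiskHomotopic_pow (hs0 : 0 ≤ s) (hs1 : s < 1) (hr : 1 < r)
    (Q : ℂ[X])
    (hQ : ∀ ζ ∈ sphere (0 : ℂ) 1, s < ‖Q.eval ζ / Q.eval 1‖ ∧ ‖Q.eval ζ / Q.eval 1‖ < r) :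
    ∃ m : ℕ, AnnulusDiskHomotopic s r (fun ζ => Q.eval ζ / Q.eval 1) (· ^ m) := by
  have hQζ : ∀ ζ ∈ sphere (0 : ℂ) 1, Q.eval ζ ≠ 0 := fun ζ hζ h0 => by
    simpa [h0] using hs0.trans_lt (hQ ζ hζ).1
  obtain ⟨κ, Φ, A, hΦ, hA, hQA⟩ := Q.exists_eval_eq_mul_exp_mul_blaschke hQζ
  have hB1 : blaschke A 1 ≠ 0 := norm_ne_zero_iff.1 (by simp [norm_blaschke hA])
  have hκ : κ ≠ 0 := by
    rintro rfl
    simpa [hQA 1 (by simp)] using hQζ 1 (by simp)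
  have hQΦ : EqOn (fun ζ => exp (Φ ζ - Φ 1) * (blaschke A ζ / blaschke A 1))
      (fun ζ => Q.eval ζ / Q.eval 1) (closedBall 0 1) := fun ζ hζ => by
    simp only [hQA ζ hζ, hQA 1 (by simp), exp_sub]
    field_simp
  refine ⟨Multiset.card A, (annulusDiskHomotopic_exp_mul_blaschke hs1 hr hΦ.continuousOn
    (hΦ.mono ball_subset_closedBall) hA fun ζ hζ => ?_).congr hQΦ (eqOn_refl _ _)⟩
  have hζQ : exp (Φ ζ - Φ 1) * (blaschke A ζ / blaschke A 1) = Q.eval ζ / Q.eval 1 :=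
    hQΦ (sphere_subset_closedBall hζ)
  have hQζ' := hQ ζ hζ
  rwa [← hζQ, norm_mul, norm_div, norm_blaschke hA (mem_sphere_zero_iff_norm.1 hζ),
    norm_blaschke hA norm_one, div_one, mul_one] at hQζ'

end

/-- **Section 4 example** (classification of `η₁(A_{s,r}, ℂ, 1)`): every analytic disk
`f` with boundary values in the annulus `A_{s,r} = {s < |z| < r}` (`0 < s < 1 < r`) and
`f 1 = 1` is h-homotopic, through analytic disks with boundary in the annulus and value `1`
at `1`, to the monomial `ζ ↦ ζ ^ m` for some `m : ℕ`. -/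
theorem annulus_disk_homotopic_to_monomial
    (s r : ℝ) (hs0 : 0 < s) (hs1 : s < 1) (hr : 1 < r)
    (f : ℂ → ℂ)
    (hfc : ContinuousOn f (closedBall (0:ℂ) 1))
    (hfd : DifferentiableOn ℂ f (ball (0:ℂ) 1))
    (hfT : ∀ ζ ∈ sphere (0:ℂ) 1, s < ‖f ζ‖ ∧ ‖f ζ‖ < r)
    (hf1 : f 1 = 1) :
    ∃ (m : ℕ) (H : ℝ × ℂ → ℂ),
      ContinuousOn H (Icc (0:ℝ) 1 ×ˢ closedBall (0:ℂ) 1) ∧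
      (∀ ζ ∈ closedBall (0:ℂ) 1, H (0, ζ) = f ζ) ∧
      (∀ ζ ∈ closedBall (0:ℂ) 1, H (1, ζ) = ζ ^ m) ∧
      ∀ t ∈ Icc (0:ℝ) 1,
        ContinuousOn (fun ζ => H (t, ζ)) (closedBall (0:ℂ) 1) ∧
        DifferentiableOn ℂ (fun ζ => H (t, ζ)) (ball (0:ℂ) 1) ∧
        (∀ ζ ∈ sphere (0:ℂ) 1, s < ‖H (t, ζ)‖ ∧ ‖H (t, ζ)‖ < r) ∧
        H (t, 1) = 1 := by
  have hf : IsAnnulusDisk s r f := ⟨hfc, hfd, hfT, hf1⟩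
  obtain ⟨g, R, hR, hgR, hfg⟩ := hf.exists_annulusDiskHomotopic_differentiableOn
  obtain ⟨P, hgP⟩ := hfg.isAnnulusDisk_right.exists_annulusDiskHomotopic_polynomial hR hgR
  obtain ⟨m, hPm⟩ := P.exists_annulusDiskHomotopic_pow hs0.le hs1 hr
    hgP.isAnnulusDisk_right.mem_annulus
  obtain ⟨H, hHc, hH, hH0, hH1⟩ := (hfg.trans hgP).trans hPm
  exact ⟨m, H, hHc, hH0, hH1, fun t ht => ⟨(hH t ht).continuousOn, (hH t ht).differentiableOn,
    (hH t ht).mem_annulus, (hH t ht).map_one⟩⟩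
end

section
/- Let E be a complex Banach space, let W be an open, path-connected subset of E, and let w₀, w₁ ∈ W. For w ∈ W, let 𝒜_w(W, E) be the set of analytic disks f in E with f(𝕋) ⊆ W and f(1) = w, and call f, g ∈ 𝒜_w(W, E) h-homotopic if there is a continuous H : [0,1] × 𝔻̄ → E with H(0, ·) = f, H(1, ·) = g such that every slice H(t, ·) lies in 𝒜_w(W, E). Then there exists a bijection between the set of h-homotopy classes of 𝒜_{w₁}(W, E) and the set of h-homotopy classes of 𝒜_{w₀}(W, E). -/
open Complex Metric Set

/-- An analytic disk in `E` with boundary in `W` and value `w` at the point `1`: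
a map `ℂ → E` continuous on the closed unit disk, holomorphic on the open unit disk,
mapping the unit circle into `W`, with `f 1 = w`. -/
def AnalyticDiskAt (E : Type*) [NormedAddCommGroup E] [NormedSpace ℂ E]
    (W : Set E) (w : E) : Type _ :=
  {f : ℂ → E //
    ContinuousOn f (Metric.closedBall (0:ℂ) 1) ∧
    DifferentiableOn ℂ f (Metric.ball (0:ℂ) 1) ∧
    (∀ ζ ∈ Metric.sphere (0:ℂ) 1, f ζ ∈ W) ∧ f 1 = w}

/-- h-homotopy in `𝒜_w(W, E)`: a continuous family of analytic disks with boundary in `W`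
and value `w` at `1` joining the two given disks. -/
def HHomotopic (E : Type*) [NormedAddCommGroup E] [NormedSpace ℂ E]
    (W : Set E) (w : E) (f g : AnalyticDiskAt E W w) : Prop :=
  ∃ H : ℝ × ℂ → E,
    ContinuousOn H (Set.Icc (0:ℝ) 1 ×ˢ Metric.closedBall (0:ℂ) 1) ∧
    (∀ ζ ∈ Metric.closedBall (0:ℂ) 1, H (0, ζ) = f.1 ζ) ∧
    (∀ ζ ∈ Metric.closedBall (0:ℂ) 1, H (1, ζ) = g.1 ζ) ∧
    ∀ t ∈ Set.Icc (0:ℝ) 1,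
      ContinuousOn (fun ζ => H (t, ζ)) (Metric.closedBall (0:ℂ) 1) ∧
      DifferentiableOn ℂ (fun ζ => H (t, ζ)) (Metric.ball (0:ℂ) 1) ∧
      (∀ ζ ∈ Metric.sphere (0:ℂ) 1, H (t, ζ) ∈ W) ∧ H (t, 1) = w

open Filter Topology

/-!
A disk `f` at `w` is moved to the disk `f + ((1 + ζ) / 2) ^ n • (w' - w)` at a nearby base point
`w'`. The bump `((1 + ζ) / 2) ^ n` is `1` at `ζ = 1`, has modulus at most `1` on the closed disk and
tends to `0` uniformly on the circle away from `1`. Hence, by compactness, for large `n` the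
boundary of the moved disk, and likewise of a moved h-homotopy, stays in `W`. Different exponents,
and moving back to `w`, are related by linearly interpolating the coefficients of `w' - w`, so the
move descends to a bijection of h-homotopy classes. Thus the relation "there is a bijection
between the classes at `w` and at `w'`" is an equivalence relation with open classes on the
connected set `W`.
-/

noncomputable def diskBump (n : ℕ) (ζ : ℂ) : ℂ := ((1 + ζ) / 2) ^ n

lemma differentiable_diskBump (n : ℕ) : Differentiable ℂ (diskBump n) := by
  unfold diskBump; fun_prop

@[simp] lemma diskBump_one (n : ℕ) : diskBump n 1 = 1 := by norm_num [diskBump]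

lemma norm_half_one_add_le_one {ζ : ℂ} (hζ : ζ ∈ closedBall (0:ℂ) 1) : ‖(1 + ζ) / 2‖ ≤ 1 := by
  rw [mem_closedBall_zero_iff] at hζ
  rw [norm_div, Complex.norm_two, div_le_one two_pos]
  linarith [norm_add_le (1:ℂ) ζ, norm_one (α := ℂ)]

lemma norm_diskBump_le_one (n : ℕ) {ζ : ℂ} (hζ : ζ ∈ closedBall (0:ℂ) 1) : ‖diskBump n ζ‖ ≤ 1 := by
  rw [diskBump, norm_pow]
  exact pow_le_one₀ (norm_nonneg _) (norm_half_one_add_le_one hζ)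

lemma norm_diskBump_antitone {n m : ℕ} (hnm : n ≤ m) {ζ : ℂ} (hζ : ζ ∈ closedBall (0:ℂ) 1) :
    ‖diskBump m ζ‖ ≤ ‖diskBump n ζ‖ := by
  rw [diskBump, diskBump, norm_pow, norm_pow]
  exact pow_le_pow_of_le_one (norm_nonneg _) (norm_half_one_add_le_one hζ) hnm

lemma eventually_norm_diskBump_le {δ η : ℝ} (hδ : 0 < δ) (hη : 0 < η) :
    ∀ᶠ n in atTop, ∀ ζ ∈ closedBall (0:ℂ) 1, δ ≤ ‖ζ - 1‖ → ‖diskBump n ζ‖ ≤ η := by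
  set q := √(1 - δ ^ 2 / 4)
  have hq : q < 1 := by rw [Real.sqrt_lt' one_pos]; nlinarith
  filter_upwards [(tendsto_pow_atTop_nhds_zero_of_lt_one (Real.sqrt_nonneg _) hq).eventually
    (gt_mem_nhds hη)] with n hn ζ hζ hδζ
  have hparallel := parallelogram_law_with_norm ℂ 1 ζ
  rw [mem_closedBall_zero_iff] at hζ
  rw [norm_one, ← norm_neg (1 - ζ), neg_sub] at hparallel
  have hle : ‖(1 + ζ) / 2‖ ≤ q := by
    refine Real.le_sqrt_of_sq_le ?_
    rw [norm_div, Complex.norm_two]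
    nlinarith [norm_nonneg ζ]
  calc ‖diskBump n ζ‖ = ‖(1 + ζ) / 2‖ ^ n := norm_pow _ _
    _ ≤ q ^ n := pow_le_pow_left₀ (norm_nonneg _) hle n
    _ ≤ η := hn.le

section

variable {E : Type*} [NormedAddCommGroup E] [NormedSpace ℂ E] {W : Set E}

/-- The factor `2` leaves room for a difference of two bumps, see `hHomotopic_push_push`. -/
def BumpAdmissible (W : Set E) (H : ℝ × ℂ → E) (v : E) (n : ℕ) : Prop :=
  ∀ t ∈ Icc (0:ℝ) 1, ∀ ζ ∈ sphere (0:ℂ) 1, ∀ z : ℂ,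
    ‖z‖ ≤ 2 * ‖diskBump n ζ‖ → H (t, ζ) + z • v ∈ W

lemma BumpAdmissible.mono {H : ℝ × ℂ → E} {v : E} {n m : ℕ} (h : BumpAdmissible W H v n)
    (hnm : n ≤ m) : BumpAdmissible W H v m := fun t ht ζ hζ z hz =>
  h t ht ζ hζ z <| hz.trans <| by
    gcongr; exact norm_diskBump_antitone hnm (sphere_subset_closedBall hζ)

lemma eventually_bumpAdmissible (hW : IsOpen W) {H : ℝ × ℂ → E} {w v : E} {ε : ℝ}
    (hHc : ContinuousOn H (Icc (0:ℝ) 1 ×ˢ closedBall (0:ℂ) 1))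
    (hHW : ∀ t ∈ Icc (0:ℝ) 1, ∀ ζ ∈ sphere (0:ℂ) 1, H (t, ζ) ∈ W)
    (hH1 : ∀ t ∈ Icc (0:ℝ) 1, H (t, 1) = w)
    (hε : 0 < ε) (hball : ball w ε ⊆ W) (hv : ‖v‖ ≤ ε / 4) :
    ∀ᶠ n in atTop, BumpAdmissible W H v n := by
  have hK : IsCompact (H '' (Icc (0:ℝ) 1 ×ˢ sphere (0:ℂ) 1)) :=
    (isCompact_Icc.prod (isCompact_sphere _ _)).image_of_continuousOn
      (hHc.mono (prod_mono subset_rfl sphere_subset_closedBall))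
  obtain ⟨ρ, hρ, hρW⟩ := hK.exists_thickening_subset_open hW <| by
    rintro _ ⟨⟨t, ζ⟩, ⟨ht, hζ⟩, rfl⟩
    exact hHW t ht ζ hζ
  obtain ⟨δ, hδ, hδH⟩ := Metric.uniformContinuousOn_iff.mp
    ((isCompact_Icc.prod (isCompact_closedBall _ _)).uniformContinuousOn_of_continuous hHc)
    (ε / 2) (half_pos hε)
  filter_upwards [eventually_norm_diskBump_le (η := ρ / (2 * (‖v‖ + 1))) hδ (by positivity)]
    with n hn t ht ζ hζ z hz
  have hζ' : ζ ∈ closedBall (0:ℂ) 1 := sphere_subset_closedBall hζ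
  by_cases hnear : ‖ζ - 1‖ < δ
  · -- near `1`, the boundary value is close to the base point `w`
    have hHw : dist (H (t, ζ)) w < ε / 2 := by
      rw [← hH1 t ht]
      refine hδH _ ⟨ht, hζ'⟩ _ ⟨ht, by simp⟩ ?_
      simpa [Prod.dist_eq, dist_eq_norm] using hnear
    have hz2 : ‖z‖ ≤ 2 := hz.trans (by linarith [norm_diskBump_le_one n hζ'])
    refine hball (mem_ball.mpr ?_)
    calc dist (H (t, ζ) + z • v) w ≤ dist (H (t, ζ) + z • v) (H (t, ζ)) + dist (H (t, ζ)) w :=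
          dist_triangle _ _ _
      _ = ‖z‖ * ‖v‖ + dist (H (t, ζ)) w := by rw [dist_self_add_left, norm_smul]
      _ < ε := by nlinarith [norm_nonneg z, norm_nonneg v]
  · -- away from `1`, the bump is uniformly small
    have hzρ : ‖z • v‖ < ρ := by
      have hbump := hn ζ hζ' (not_lt.mp hnear)
      rw [norm_smul]
      calc ‖z‖ * ‖v‖ ≤ 2 * (ρ / (2 * (‖v‖ + 1))) * ‖v‖ := by gcongr; linarith
        _ < ρ := by
          rw [mul_div_assoc', mul_div_mul_left _ _ two_ne_zero, div_mul_eq_mul_div,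
            div_lt_iff₀ (by positivity)]
          nlinarith [norm_nonneg v]
    have hHK : H (t, ζ) ∈ H '' (Icc (0:ℝ) 1 ×ˢ sphere (0:ℂ) 1) := mem_image_of_mem H ⟨ht, hζ⟩
    refine hρW (ball_subset_thickening hHK ρ ?_)
    rwa [mem_ball, dist_eq_norm, add_sub_cancel_left]

lemma norm_one_sub_mul_add_mul_le_max {t : ℝ} (ht : t ∈ Icc (0:ℝ) 1) (a b : ℂ) :
    ‖(1 - (t:ℂ)) * a + t * b‖ ≤ max ‖a‖ ‖b‖ := by
  have h1t : ‖(1:ℂ) - t‖ = 1 - t := by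
    rw [← ofReal_one, ← ofReal_sub, norm_real, Real.norm_of_nonneg (sub_nonneg.mpr ht.2)]
  calc ‖(1 - (t:ℂ)) * a + t * b‖ ≤ (1 - t) * ‖a‖ + t * ‖b‖ := by
        refine (norm_add_le _ _).trans_eq ?_
        rw [norm_mul, norm_mul, h1t, norm_real, Real.norm_of_nonneg ht.1]
    _ ≤ max ‖a‖ ‖b‖ := by nlinarith [ht.1, ht.2, le_max_left ‖a‖ ‖b‖, le_max_right ‖a‖ ‖b‖]

lemma hHomotopic_of_add_interpolate_smul {w w' : E} (G : ℝ × ℂ → E)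
    (hGc : ContinuousOn G (Icc (0:ℝ) 1 ×ˢ closedBall (0:ℂ) 1))
    (hGd : ∀ t ∈ Icc (0:ℝ) 1, DifferentiableOn ℂ (fun ζ => G (t, ζ)) (ball (0:ℂ) 1))
    (hG1 : ∀ t ∈ Icc (0:ℝ) 1, G (t, 1) = w) (v : E) {a b : ℂ → ℂ}
    (ha : Differentiable ℂ a) (hb : Differentiable ℂ b) (hab : a 1 = b 1) (hw' : w + a 1 • v = w')
    (hW : ∀ t ∈ Icc (0:ℝ) 1, ∀ ζ ∈ sphere (0:ℂ) 1,
      G (t, ζ) + ((1 - (t:ℂ)) * a ζ + t * b ζ) • v ∈ W)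
    {f g : AnalyticDiskAt E W w'}
    (hf : ∀ ζ ∈ closedBall (0:ℂ) 1, f.1 ζ = G (0, ζ) + a ζ • v)
    (hg : ∀ ζ ∈ closedBall (0:ℂ) 1, g.1 ζ = G (1, ζ) + b ζ • v) :
    HHomotopic E W w' f g := by
  set F : ℝ × ℂ → E := fun p => G p + ((1 - (p.1:ℂ)) * a p.2 + p.1 * b p.2) • v
  have hac := ha.continuous
  have hbc := hb.continuous
  have hFc : ContinuousOn F (Icc (0:ℝ) 1 ×ˢ closedBall (0:ℂ) 1) :=
    hGc.add (by fun_prop : Continuous fun p : ℝ × ℂ =>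
      ((1 - (p.1:ℂ)) * a p.2 + p.1 * b p.2) • v).continuousOn
  refine ⟨F, hFc, fun ζ hζ => ?_, fun ζ hζ => ?_, fun t ht => ⟨?_, ?_, hW t ht, ?_⟩⟩
  · simp [F, hf ζ hζ]
  · simp [F, hg ζ hζ]
  · exact hFc.comp (continuous_const.prodMk continuous_id).continuousOn fun ζ hζ => ⟨ht, hζ⟩
  · exact (hGd t ht).add (by fun_prop : Differentiable ℂ fun ζ =>
      ((1 - (t:ℂ)) * a ζ + t * b ζ) • v).differentiableOn
  · simp only [F, hG1 t ht, ← hab, ← hw']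
    congr 2
    ring

namespace AnalyticDiskAt

variable {w : E}

lemma continuousOn_comp_snd (f : AnalyticDiskAt E W w) :
    ContinuousOn (fun p : ℝ × ℂ => f.1 p.2) (Icc (0:ℝ) 1 ×ˢ closedBall (0:ℂ) 1) :=
  f.2.1.comp continuous_snd.continuousOn fun _ hp => hp.2

lemma eventually_bumpAdmissible (hW : IsOpen W) (f : AnalyticDiskAt E W w) {v : E} {ε : ℝ}
    (hε : 0 < ε) (hball : ball w ε ⊆ W) (hv : ‖v‖ ≤ ε / 4) :
    ∀ᶠ n in atTop, BumpAdmissible W (fun p => f.1 p.2) v n :=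
  _root_.eventually_bumpAdmissible hW f.continuousOn_comp_snd (fun _ _ => f.2.2.2.1)
    (fun _ _ => f.2.2.2.2) hε hball hv

noncomputable def push (f : AnalyticDiskAt E W w) (w' : E) (n : ℕ)
    (hn : BumpAdmissible W (fun p => f.1 p.2) (w' - w) n) : AnalyticDiskAt E W w' :=
  ⟨fun ζ => f.1 ζ + diskBump n ζ • (w' - w),
    f.2.1.add ((differentiable_diskBump n).continuous.smul continuous_const).continuousOn,
    f.2.2.1.add ((differentiable_diskBump n).smul_const _).differentiableOn,
    fun ζ hζ => hn 0 (left_mem_Icc.mpr zero_le_one) ζ hζ _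
      (le_mul_of_one_le_left (norm_nonneg _) one_le_two),
    by simp [f.2.2.2.2]⟩

lemma push_apply (f : AnalyticDiskAt E W w) (w' : E) (n : ℕ)
    (hn : BumpAdmissible W (fun p => f.1 p.2) (w' - w) n) (ζ : ℂ) :
    (f.push w' n hn).1 ζ = f.1 ζ + diskBump n ζ • (w' - w) := rfl

lemma hHomotopic_push_of_le (f : AnalyticDiskAt E W w) (w' : E) {n m : ℕ} (hnm : n ≤ m)
    (hn : BumpAdmissible W (fun p => f.1 p.2) (w' - w) n)
    (hm : BumpAdmissible W (fun p => f.1 p.2) (w' - w) m) :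
    HHomotopic E W w' (f.push w' n hn) (f.push w' m hm) := by
  refine hHomotopic_of_add_interpolate_smul _ f.continuousOn_comp_snd (fun _ _ => f.2.2.1)
    (fun _ _ => f.2.2.2.2) (w' - w) (differentiable_diskBump n) (differentiable_diskBump m)
    (by simp) (by simp) (fun t ht ζ hζ => hn t ht ζ hζ _ ?_) (fun _ _ => rfl) (fun _ _ => rfl)
  calc _ ≤ max ‖diskBump n ζ‖ ‖diskBump m ζ‖ := norm_one_sub_mul_add_mul_le_max ht _ _
    _ ≤ 2 * ‖diskBump n ζ‖ := by
      rw [max_eq_left (norm_diskBump_antitone hnm (sphere_subset_closedBall hζ))]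
      linarith [norm_nonneg (diskBump n ζ)]

lemma hHomotopic_push_push (f : AnalyticDiskAt E W w) (w' : E) (n m : ℕ)
    (hn : BumpAdmissible W (fun p => f.1 p.2) (w' - w) n)
    (hm : BumpAdmissible W (fun p => (f.push w' n hn).1 p.2) (w - w') m) :
    HHomotopic E W w ((f.push w' n hn).push w m hm) f := by
  refine hHomotopic_of_add_interpolate_smul _ f.continuousOn_comp_snd (fun _ _ => f.2.2.1)
    (fun _ _ => f.2.2.2.2) (w' - w)
    ((differentiable_diskBump n).sub (differentiable_diskBump m)) (differentiable_const 0)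
    (by simp) (by simp) (fun t ht ζ hζ => ?_) (fun ζ _ => ?_) (fun ζ _ => by simp)
  · have hζ' := sphere_subset_closedBall hζ
    rcases le_total n m with hnm | hmn
    · refine hn t ht ζ hζ _ ?_
      calc _ ≤ max ‖diskBump n ζ - diskBump m ζ‖ ‖(0:ℂ)‖ :=
            norm_one_sub_mul_add_mul_le_max ht _ _
        _ ≤ ‖diskBump n ζ‖ + ‖diskBump m ζ‖ := by
            rw [norm_zero, max_eq_left (norm_nonneg _)]; exact norm_sub_le _ _
        _ ≤ 2 * ‖diskBump n ζ‖ := by linarith [norm_diskBump_antitone hnm hζ']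
    · convert hm t ht ζ hζ ((1 - (t:ℂ)) * diskBump m ζ + t * diskBump n ζ) ?_ using 1
      · simp only [push_apply, Pi.sub_apply]
        module
      · calc _ ≤ max ‖diskBump m ζ‖ ‖diskBump n ζ‖ := norm_one_sub_mul_add_mul_le_max ht _ _
          _ ≤ 2 * ‖diskBump m ζ‖ := by
            rw [max_eq_left (norm_diskBump_antitone hmn hζ')]
            linarith [norm_nonneg (diskBump m ζ)]
  · simp only [push_apply, Pi.sub_apply]
    module

end AnalyticDiskAt

variable {w w' : E} {ε : ℝ}

lemma HHomotopic.eventually_hHomotopic_push (hW : IsOpen W) (hε : 0 < ε) (hball : ball w ε ⊆ W)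
    (hv : ‖w' - w‖ ≤ ε / 4) {f g : AnalyticDiskAt E W w} (hfg : HHomotopic E W w f g) :
    ∀ᶠ m in atTop, ∀ hf hg, HHomotopic E W w' (f.push w' m hf) (g.push w' m hg) := by
  obtain ⟨H, hHc, hH0, hH1, hHt⟩ := hfg
  filter_upwards [eventually_bumpAdmissible hW hHc (fun t ht => (hHt t ht).2.2.1)
    (fun t ht => (hHt t ht).2.2.2) hε hball hv] with m hm hf hg
  refine hHomotopic_of_add_interpolate_smul H hHc (fun t ht => (hHt t ht).2.1)
    (fun t ht => (hHt t ht).2.2.2) (w' - w) (differentiable_diskBump m)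
    (differentiable_diskBump m) rfl (by simp) (fun t ht ζ hζ => hm t ht ζ hζ _ ?_)
    (fun ζ hζ => by rw [hH0 ζ hζ]; rfl) (fun ζ hζ => by rw [hH1 ζ hζ]; rfl)
  rw [← add_mul, sub_add_cancel, one_mul]
  linarith [norm_nonneg (diskBump m ζ)]

lemma HHomotopic.quot_mk_push_eq (hW : IsOpen W) (hε : 0 < ε) (hball : ball w ε ⊆ W)
    (hv : ‖w' - w‖ ≤ ε / 4) {f g : AnalyticDiskAt E W w} (hfg : HHomotopic E W w f g)
    {n m : ℕ} (hn : BumpAdmissible W (fun p => f.1 p.2) (w' - w) n)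
    (hm : BumpAdmissible W (fun p => g.1 p.2) (w' - w) m) :
    Quot.mk (HHomotopic E W w') (f.push w' n hn) = Quot.mk _ (g.push w' m hm) := by
  obtain ⟨M, hfgM, hnM, hmM⟩ := ((hfg.eventually_hHomotopic_push hW hε hball hv).and
    ((eventually_ge_atTop n).and (eventually_ge_atTop m))).exists
  calc Quot.mk _ (f.push w' n hn) = Quot.mk _ (f.push w' M (hn.mono hnM)) :=
        Quot.sound (f.hHomotopic_push_of_le w' hnM _ _)
    _ = Quot.mk _ (g.push w' M (hm.mono hmM)) := Quot.sound (hfgM _ _)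
    _ = Quot.mk _ (g.push w' m hm) := (Quot.sound (g.hHomotopic_push_of_le w' hmM _ _)).symm

noncomputable def pushQuot (hW : IsOpen W) (hε : 0 < ε) (hball : ball w ε ⊆ W)
    (hv : ‖w' - w‖ ≤ ε / 4) : Quot (HHomotopic E W w) → Quot (HHomotopic E W w') :=
  Quot.lift (fun f => Quot.mk _
      (f.push w' _ (f.eventually_bumpAdmissible hW hε hball hv).exists.choose_spec))
    fun _ _ hfg => hfg.quot_mk_push_eq hW hε hball hv _ _

lemma pushQuot_pushQuot (hW : IsOpen W) (hε : 0 < ε) (hball : ball w ε ⊆ W)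
    (hball' : ball w' ε ⊆ W) (hv : ‖w' - w‖ ≤ ε / 4) (hv' : ‖w - w'‖ ≤ ε / 4)
    (x : Quot (HHomotopic E W w)) :
    pushQuot hW hε hball' hv' (pushQuot hW hε hball hv x) = x := by
  induction x using Quot.ind with
  | mk f => exact Quot.sound (f.hHomotopic_push_push w' _ _ _ _)

lemma nonempty_quot_equiv_of_norm_sub_le (hW : IsOpen W) (hε : 0 < ε) (hball : ball w ε ⊆ W)
    (hball' : ball w' ε ⊆ W) (hv : ‖w' - w‖ ≤ ε / 4) :
    Nonempty (Quot (HHomotopic E W w) ≃ Quot (HHomotopic E W w')) := by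
  have hv' : ‖w - w'‖ ≤ ε / 4 := by rwa [norm_sub_rev]
  exact ⟨⟨pushQuot hW hε hball hv, pushQuot hW hε hball' hv',
    pushQuot_pushQuot hW hε hball hball' hv hv', pushQuot_pushQuot hW hε hball' hball hv' hv⟩⟩

lemma eventually_nonempty_quot_equiv (hW : IsOpen W) (hw : w ∈ W) :
    ∀ᶠ w' in 𝓝 w, Nonempty (Quot (HHomotopic E W w) ≃ Quot (HHomotopic E W w')) := by
  obtain ⟨ε, hε, hball⟩ := Metric.isOpen_iff.mp hW w hw
  filter_upwards [ball_mem_nhds w (by positivity : 0 < ε / 8)] with w' hw'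
  rw [mem_ball, dist_eq_norm] at hw'
  refine nonempty_quot_equiv_of_norm_sub_le hW (half_pos hε)
    ((ball_subset_ball (half_le_self hε.le)).trans hball)
    ((ball_subset_ball' ?_).trans hball) (by linarith)
  rw [dist_eq_norm]
  linarith

end

/-- **Theorem 5.4(2)** (set-theoretic content): for an open path-connected subset `W` of a
complex Banach space `E` and `w₀, w₁ ∈ W`, there is a bijection between the set of
h-homotopy classes of `𝒜_{w₁}(W, E)` and that of `𝒜_{w₀}(W, E)`. -/
theorem base_change_bijection
    (E : Type*) [NormedAddCommGroup E] [NormedSpace ℂ E]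
    (W : Set E) (hWopen : IsOpen W) (hWconn : IsPathConnected W)
    (w₀ w₁ : E) (hw₀ : w₀ ∈ W) (hw₁ : w₁ ∈ W) :
    Nonempty (Quot (HHomotopic E W w₁) ≃ Quot (HHomotopic E W w₀)) :=
  hWconn.isConnected.isPreconnected.induction₂
    (fun x y => Nonempty (Quot (HHomotopic E W x) ≃ Quot (HHomotopic E W y)))
    (fun _ hx => nhdsWithin_le_nhds (eventually_nonempty_quot_equiv hWopen hx))
    (fun _ _ _ _ _ _ ⟨e⟩ ⟨e'⟩ => ⟨e.trans e'⟩) (fun _ _ _ _ ⟨e⟩ => ⟨e.symm⟩) hw₁ hw₀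
end

section
/- Let E be a complex Banach space, let W be an open, path-connected subset of E, and let w₀ ∈ W. Let g : ℂ → E be an analytic disk with g(𝕋) ⊆ W (no base-point condition). Then there exist an analytic disk f with f(𝕋) ⊆ W and f(1) = w₀, and a continuous map H : [0,1] × 𝔻̄ → E with H(0, ·) = g and H(1, ·) = f such that for every t ∈ [0,1] the slice H(t, ·) is an analytic disk with H(t, 𝕋) ⊆ W. That is, every connected component of the space 𝒜(W, E) of analytic disks with boundary in W contains a disk passing through w₀ at the point 1. -/
/-!
Moving the base point is a local matter. If `f` has boundary in `W` and `w` is close to `f 1`,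
take the homotopy `f + (s * p) • (w - f 1)`, `s ∈ [0, 1]`, with the peak polynomial
`p ζ = ((1 + ζ) / 2) ^ n`: `‖p‖ ≤ 1` on the closed disk, `p 1 = 1`, and for large `n` it is
uniformly small on the circle away from `1`. Boundary points near `1` then stay in a ball around
`f 1` contained in `W`, and the others move by less than the distance from `f(𝕋)` to `Wᶜ`.
The radius of the admissible ball depends only on `f 1` and `W`, so "every disk based at `x` is
homotopic to one based at `y`" holds locally in both directions and is transitive; hence it
holds for all `x, y` in the connected set `W`.
-/

open Complex Metric Set

lemma norm_one_add_div_two_sq_le {ζ : ℂ} (hζ : ‖ζ‖ ≤ 1) :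
    ‖(1 + ζ) / 2‖ ^ 2 ≤ 1 - dist ζ 1 ^ 2 / 4 := by
  have hpar := parallelogram_law_with_norm ℝ (1 : ℂ) ζ
  rw [norm_one, norm_sub_rev] at hpar
  rw [dist_eq_norm, norm_div, Complex.norm_two]
  nlinarith [norm_nonneg ζ]

lemma exists_pow_one_add_div_two_lt {ρ η : ℝ} (hρ : 0 < ρ) (hη : 0 < η) :
    ∃ n : ℕ, ∀ ζ ∈ closedBall (0 : ℂ) 1, ρ ≤ dist ζ 1 →
      ‖((1 + ζ) / 2) ^ n‖ < η := by
  obtain ⟨n, hn⟩ := exists_pow_lt_of_lt_one (pow_pos hη 2)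
    (by nlinarith : 1 - ρ ^ 2 / 4 < 1)
  refine ⟨n, fun ζ hζ hρζ => ?_⟩
  have hq : ‖(1 + ζ) / 2‖ ^ 2 ≤ 1 - ρ ^ 2 / 4 := by
    have := norm_one_add_div_two_sq_le (mem_closedBall_zero_iff.1 hζ)
    nlinarith
  refine lt_of_pow_lt_pow_left₀ 2 hη.le ?_
  calc ‖((1 + ζ) / 2) ^ n‖ ^ 2 = (‖(1 + ζ) / 2‖ ^ 2) ^ n := by
        rw [norm_pow, ← pow_mul, ← pow_mul, mul_comm]
    _ ≤ (1 - ρ ^ 2 / 4) ^ n := pow_le_pow_left₀ (by positivity) hq n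
    _ < η ^ 2 := hn

lemma norm_one_add_div_two_le_one {ζ : ℂ} (hζ : ζ ∈ closedBall (0 : ℂ) 1) :
    ‖(1 + ζ) / 2‖ ≤ 1 := by
  have := norm_one_add_div_two_sq_le (mem_closedBall_zero_iff.1 hζ)
  nlinarith [dist_nonneg (x := ζ) (y := 1), norm_nonneg ((1 + ζ) / 2)]

section

variable {E : Type*} [NormedAddCommGroup E] [NormedSpace ℂ E] {W : Set E}

def IsAnalyticDiskIn (W : Set E) (f : ℂ → E) : Prop :=
  ContinuousOn f (closedBall 0 1) ∧ DifferentiableOn ℂ f (ball 0 1) ∧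
    ∀ ζ ∈ sphere (0 : ℂ) 1, f ζ ∈ W

def AnalyticDiskHomotopic (W : Set E) (f g : ℂ → E) : Prop :=
  ∃ H : ℝ × ℂ → E, ContinuousOn H (Icc 0 1 ×ˢ closedBall 0 1) ∧
    EqOn (fun ζ => H (0, ζ)) f (closedBall 0 1) ∧
    EqOn (fun ζ => H (1, ζ)) g (closedBall 0 1) ∧
    ∀ t ∈ Icc (0 : ℝ) 1, IsAnalyticDiskIn W fun ζ => H (t, ζ)

theorem IsAnalyticDiskIn.congr {f g : ℂ → E} (hf : IsAnalyticDiskIn W f)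
    (hfg : EqOn f g (closedBall 0 1)) : IsAnalyticDiskIn W g :=
  ⟨hf.1.congr hfg.symm, hf.2.1.congr (hfg.symm.mono ball_subset_closedBall),
    fun ζ hζ => hfg (sphere_subset_closedBall hζ) ▸ hf.2.2 ζ hζ⟩

namespace AnalyticDiskHomotopic

theorem isAnalyticDiskIn_right {f g : ℂ → E} (h : AnalyticDiskHomotopic W f g) :
    IsAnalyticDiskIn W g :=
  let ⟨_, _, _, h₁, hH⟩ := h
  (hH 1 (right_mem_Icc.2 zero_le_one)).congr h₁

theorem trans {f g k : ℂ → E} (hfg : AnalyticDiskHomotopic W f g)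
    (hgk : AnalyticDiskHomotopic W g k) : AnalyticDiskHomotopic W f k := by
  obtain ⟨H₁, hc₁, h₁0, h₁1, hH₁⟩ := hfg
  obtain ⟨H₂, hc₂, h₂0, h₂1, hH₂⟩ := hgk
  -- Concatenation written as a sum, so that continuity needs no gluing: since
  -- `H₂ (0, ·) = g = H₁ (1, ·)`, two of the three terms cancel on either half of `[0, 1]`.
  set H : ℝ × ℂ → E := fun p =>
    H₁ (min (2 * p.1) 1, p.2) + H₂ (max (2 * p.1 - 1) 0, p.2) - H₁ (1, p.2)
  have hmid : EqOn (fun ζ => H₂ (0, ζ)) (fun ζ => H₁ (1, ζ)) (closedBall 0 1) :=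
    h₂0.trans h₁1.symm
  have hfirst : ∀ s ≤ 1 / 2,
      EqOn (fun ζ => H (s, ζ)) (fun ζ => H₁ (2 * s, ζ)) (closedBall 0 1) := by
    intro s hs ζ hζ
    simp only [H, min_eq_left (by linarith : 2 * s ≤ 1),
      max_eq_right (by linarith : 2 * s - 1 ≤ 0), hmid hζ, add_sub_cancel_right]
  have hsecond : ∀ s ≥ 1 / 2,
      EqOn (fun ζ => H (s, ζ)) (fun ζ => H₂ (2 * s - 1, ζ)) (closedBall 0 1) := by
    intro s hs ζ hζ
    simp only [H, min_eq_right (by linarith : 1 ≤ 2 * s),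
      max_eq_left (by linarith : 0 ≤ 2 * s - 1), add_sub_cancel_left]
  refine ⟨H, ?_, ?_, ?_, fun s hs => ?_⟩
  · refine ((hc₁.comp (by fun_prop) fun p hp => ?_).add
      (hc₂.comp (by fun_prop) fun p hp => ?_)).sub (hc₁.comp (by fun_prop) fun p hp => ?_) <;>
      obtain ⟨⟨hp0, hp1⟩, hp⟩ := hp
    · exact ⟨⟨le_min (by linarith) zero_le_one, min_le_right _ _⟩, hp⟩
    · exact ⟨⟨le_max_right _ _, max_le (by linarith) zero_le_one⟩, hp⟩
    · exact ⟨right_mem_Icc.2 zero_le_one, hp⟩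
  · exact fun ζ hζ => (hfirst 0 (by norm_num) hζ).trans (by simpa using h₁0 hζ)
  · exact fun ζ hζ => (hsecond 1 (by norm_num) hζ).trans (by norm_num [h₂1 hζ])
  · rcases le_total s (1 / 2) with hs' | hs'
    · exact (hH₁ _ ⟨by linarith [hs.1], by linarith⟩).congr (hfirst s hs').symm
    · exact (hH₂ _ ⟨by linarith, by linarith [hs.2]⟩).congr (hsecond s hs').symm

end AnalyticDiskHomotopic

theorem IsAnalyticDiskIn.exists_homotopic_apply_one_eq_of_mem_ball (hW : IsOpen W)
    {f : ℂ → E} (hf : IsAnalyticDiskIn W f) {δ : ℝ} (hδW : ball (f 1) (2 * δ) ⊆ W)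
    {w : E} (hw : w ∈ ball (f 1) δ) :
    ∃ g, AnalyticDiskHomotopic W f g ∧ g 1 = w := by
  have hδ : 0 < δ := pos_of_mem_ball hw
  have h1 : (1 : ℂ) ∈ closedBall 0 1 := by simp
  obtain ⟨ρ, hρ, hfρ⟩ := Metric.continuousWithinAt_iff.1 (hf.1 1 h1) δ hδ
  obtain ⟨ε, hε, hεW⟩ := ((isCompact_sphere (0 : ℂ) 1).image_of_continuousOn
    (hf.1.mono sphere_subset_closedBall)).exists_thickening_subset_open hW
    (image_subset_iff.2 hf.2.2)
  obtain ⟨n, hn⟩ := exists_pow_one_add_div_two_lt hρ (div_pos hε hδ)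
  set v := w - f 1
  have hv : ‖v‖ < δ := by rwa [mem_ball, dist_eq_norm] at hw
  set H : ℝ × ℂ → E := fun p => f p.2 + ((p.1 : ℂ) * ((1 + p.2) / 2) ^ n) • v
  have hslice : ∀ t ∈ Icc (0 : ℝ) 1, IsAnalyticDiskIn W fun ζ => H (t, ζ) := by
    intro t ht
    show IsAnalyticDiskIn W fun ζ => f ζ + ((t : ℂ) * ((1 + ζ) / 2) ^ n) • v
    refine ⟨hf.1.add (Continuous.continuousOn (by fun_prop)),
      hf.2.1.add (Differentiable.differentiableOn (by fun_prop)), fun ζ hζS => ?_⟩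
    have hζ : ζ ∈ closedBall (0 : ℂ) 1 := sphere_subset_closedBall hζS
    have hmove :
        ‖((t : ℂ) * ((1 + ζ) / 2) ^ n) • v‖ ≤ ‖((1 + ζ) / 2) ^ n‖ * ‖v‖ := by
      rw [norm_smul, norm_mul, Complex.norm_real, Real.norm_of_nonneg ht.1]
      gcongr
      exact mul_le_of_le_one_left (norm_nonneg _) ht.2
    by_cases hnear : dist ζ 1 < ρ
    · apply hδW
      have hpeak : ‖((1 + ζ) / 2) ^ n‖ ≤ 1 := by
        rw [norm_pow]; exact pow_le_one₀ (norm_nonneg _) (norm_one_add_div_two_le_one hζ)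
      calc dist (f ζ + ((t : ℂ) * ((1 + ζ) / 2) ^ n) • v) (f 1)
          ≤ ‖((t : ℂ) * ((1 + ζ) / 2) ^ n) • v‖ + dist (f ζ) (f 1) := by
            rw [← dist_self_add_left _ (f ζ)]; exact dist_triangle _ _ _
        _ < δ + δ := by
          gcongr
          · exact hmove.trans_lt ((mul_le_of_le_one_left (norm_nonneg v) hpeak).trans_lt hv)
          · exact hfρ hζ hnear
        _ = 2 * δ := by ring
    · apply hεW
      refine mem_thickening_iff.2 ⟨f ζ, mem_image_of_mem f hζS, ?_⟩
      rw [dist_self_add_left]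
      calc _ ≤ ‖((1 + ζ) / 2) ^ n‖ * ‖v‖ := hmove
        _ < ε / δ * δ :=
          mul_lt_mul'' (hn ζ hζ (not_lt.1 hnear)) hv (norm_nonneg _) (norm_nonneg _)
        _ = ε := div_mul_cancel₀ ε hδ.ne'
  refine ⟨fun ζ => H (1, ζ), ⟨H, ?_, fun ζ _ => by simp [H], fun _ _ => rfl, hslice⟩, ?_⟩
  · exact (hf.1.comp continuousOn_snd fun _ hp => hp.2).add
      (Continuous.continuousOn (by fun_prop))
  · norm_num [H, v]

theorem IsAnalyticDiskIn.exists_homotopic_apply_one_eq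
    (hW : IsOpen W) (hWc : IsPreconnected W) {f : ℂ → E} (hf : IsAnalyticDiskIn W f) {w : E}
    (hw : w ∈ W) : ∃ g, AnalyticDiskHomotopic W f g ∧ g 1 = w := by
  let P : E → E → Prop := fun x y => ∀ f, IsAnalyticDiskIn W f → f 1 = x →
    ∃ g, AnalyticDiskHomotopic W f g ∧ g 1 = y
  refine hWc.induction₂' P (fun x hx => ?_) (fun x y z _ _ _ hxy hyz => ?_)
    (hf.2.2 1 (by simp)) hw f hf rfl
  · obtain ⟨δ, hδ, hδW⟩ := Metric.isOpen_iff.1 hW x hx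
    filter_upwards [mem_nhdsWithin_of_mem_nhds (ball_mem_nhds x (by positivity : 0 < δ / 3))]
      with y hy
    refine ⟨?_, ?_⟩ <;> rintro f hf rfl
    · exact hf.exists_homotopic_apply_one_eq_of_mem_ball hW
        ((ball_subset_ball (by linarith)).trans hδW) hy
    · exact hf.exists_homotopic_apply_one_eq_of_mem_ball hW
        ((ball_subset_ball' (by rw [mem_ball] at hy; linarith)).trans hδW) (mem_ball_comm.1 hy)
  · rintro f hf rfl
    obtain ⟨g, hfg, hg1⟩ := hxy f hf rfl
    obtain ⟨k, hgk, hk1⟩ := hyz g hfg.isAnalyticDiskIn_right hg1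
    exact ⟨k, hfg.trans hgk, hk1⟩

end

/-- **Theorem 5.8 (surjectivity part)**: for an open path-connected subset `W` of a complex
Banach space `E` and `w₀ ∈ W`, every analytic disk `g` with boundary in `W` can be joined,
by a continuous family of analytic disks with boundary in `W`, to an analytic disk `f` with
boundary in `W` and `f 1 = w₀`; i.e. every connected component of `𝒜(W, E)` contains a
disk passing through `w₀` at the point `1`. -/
theorem component_contains_based_disk
    (E : Type*) [NormedAddCommGroup E] [NormedSpace ℂ E]
    (W : Set E) (hWopen : IsOpen W) (hWconn : IsPathConnected W)
    (w₀ : E) (hw₀ : w₀ ∈ W)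
    (g : ℂ → E)
    (hgc : ContinuousOn g (closedBall (0:ℂ) 1))
    (hgd : DifferentiableOn ℂ g (ball (0:ℂ) 1))
    (hgT : ∀ ζ ∈ sphere (0:ℂ) 1, g ζ ∈ W) :
    ∃ f : ℂ → E,
      ContinuousOn f (closedBall (0:ℂ) 1) ∧
      DifferentiableOn ℂ f (ball (0:ℂ) 1) ∧
      (∀ ζ ∈ sphere (0:ℂ) 1, f ζ ∈ W) ∧ f 1 = w₀ ∧
      ∃ H : ℝ × ℂ → E,
        ContinuousOn H (Icc (0:ℝ) 1 ×ˢ closedBall (0:ℂ) 1) ∧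
        (∀ ζ ∈ closedBall (0:ℂ) 1, H (0, ζ) = g ζ) ∧
        (∀ ζ ∈ closedBall (0:ℂ) 1, H (1, ζ) = f ζ) ∧
        ∀ t ∈ Icc (0:ℝ) 1,
          ContinuousOn (fun ζ => H (t, ζ)) (closedBall (0:ℂ) 1) ∧
          DifferentiableOn ℂ (fun ζ => H (t, ζ)) (ball (0:ℂ) 1) ∧
          (∀ ζ ∈ sphere (0:ℂ) 1, H (t, ζ) ∈ W) := by
  have hg : IsAnalyticDiskIn W g := ⟨hgc, hgd, hgT⟩
  obtain ⟨f, hgf, hf1⟩ :=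
    hg.exists_homotopic_apply_one_eq hWopen hWconn.isConnected.isPreconnected hw₀
  obtain ⟨hfc, hfd, hfT⟩ := hgf.isAnalyticDiskIn_right
  obtain ⟨H, hHc, hH0, hH1, hH⟩ := hgf
  exact ⟨f, hfc, hfd, hfT, hf1, H, hHc, fun _ hζ => hH0 hζ, fun _ hζ => hH1 hζ, hH⟩
end
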